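/- arXiv:0809.3507 — 10 statements merged into one kernel-verified Lean document; each statement's English description precedes it below -/
import Mathlib

section
/- Let R be a regular local ring of dimension d dominated by a valuation ν, and let s₀ be the smallest element of S^R(ν). Then |S^R(ν) ∩ (0, n·s₀)| < C(d-1+n, d) (the binomial coefficient) for all natural numbers n. -/
/-!
Every `γ ∈ S` is the value of some `f ∈ 𝔪`, so the ideals `J γ = {r | γ ≤ ν r}` drop strictly
at each such `γ`. Listing the elements of `S ∩ (0, n s₀)` from the top gives a strictly increasing
chain `J (n s₀) < J γₖ < ⋯ < J γ₁ < R` with `k + 1` steps, and `𝔪ⁿ ≤ J (n s₀)` because `s₀` is the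
least value on `𝔪`. So `k + 1 ≤ ℓ(R/𝔪ⁿ) = ∑_{j<n} ℓ(𝔪ʲ/𝔪ʲ⁺¹)`, and `𝔪ʲ/𝔪ʲ⁺¹` is a vector space
over `R/𝔪` spanned by the `multichoose d j` monomials of degree `j` in `d` generators of `𝔪`;
these sum to `C(d-1+n, d)`.
-/

open Finset Pointwise

lemma Nat.sum_range_multichoose_eq_choose (d : ℕ) {n : ℕ} (hn : n ≠ 0) :
    ∑ j ∈ range n, d.multichoose j = (d - 1 + n).choose d := by
  obtain ⟨n, rfl⟩ := Nat.exists_eq_succ_of_ne_zero hn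
  rw [sum_range_multichoose]
  rcases d with _ | d
  · simp
  · congr 1; omega

lemma Finset.card_pow_le_multichoose {M : Type*} [CommMonoid M] [DecidableEq M]
    (s : Finset M) (n : ℕ) : #(s ^ n) ≤ (#s).multichoose n := by
  have hsub : s ^ n ⊆ univ.image fun t : Sym s n => ((t : Multiset s).map (↑)).prod := by
    intro a ha
    obtain ⟨f, rfl⟩ := Finset.mem_pow.1 ha
    exact mem_image.2 ⟨⟨↑(List.ofFn f), by simp⟩, mem_univ _, by simp [List.map_ofFn]; rfl⟩
  calc #(s ^ n) ≤ #(univ : Finset (Sym s n)) := (card_le_card hsub).trans card_image_le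
    _ = (#s).multichoose n := by rw [card_univ, Sym.card_sym_eq_multichoose, Fintype.card_coe]

lemma Module.length_quotient_eq_add {R M : Type*} [Ring R] [AddCommGroup M] [Module R M]
    {N P : Submodule R M} (h : N ≤ P) :
    Module.length R (M ⧸ N) = Module.length R (P.map N.mkQ) + Module.length R (M ⧸ P) := by
  rw [Module.length_eq_add_of_exact (P.map N.mkQ).subtype (P.map N.mkQ).mkQ
    (Submodule.injective_subtype _) (Submodule.mkQ_surjective _) (LinearMap.exact_subtype_mkQ _),
    (Submodule.quotientQuotientEquivQuotient N P h).length_eq]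

lemma Submodule.length_span_le_card {R M : Type*} [CommRing R] [AddCommGroup M] [Module R M]
    (𝔪 : Ideal R) [𝔪.IsMaximal] (t : Finset M) (ht : ∀ r ∈ 𝔪, ∀ x ∈ t, r • x = 0) :
    Module.length R (span R (t : Set M)) ≤ #t := by
  classical
  set N := span R (t : Set M)
  have hM : Module.IsTorsionBySet R N 𝔪 := by
    rw [Module.isTorsionBySet_iff_subset_annihilator]
    exact fun r hr => (mem_annihilator_span _ r).2 fun x => ht r hr x x.2
  let _ := hM.module
  let _ := Ideal.Quotient.field 𝔪
  let g : Finset N := t.subtype (· ∈ N)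
  have hspan : span (R ⧸ 𝔪) (g : Set N) = ⊤ := by
    apply Submodule.restrictScalars_injective R
    rw [restrictScalars_top, eq_top_iff, ← span_span_coe_preimage]
    refine (span_mono fun x hx => ?_).trans (span_le_restrictScalars R _ _)
    simpa [g] using hx
  have : Module.Finite (R ⧸ 𝔪) N := ⟨⟨g, hspan⟩⟩
  rw [Module.length_eq_of_surjective (S := R) (R := R ⧸ 𝔪) Ideal.Quotient.mk_surjective,
    Module.length_eq_finrank, ← finrank_top, ← hspan, Nat.cast_le]
  calc Module.finrank (R ⧸ 𝔪) (span (R ⧸ 𝔪) (g : Set N)) ≤ #g := finrank_span_finset_le_card g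
    _ ≤ #t := by rw [card_subtype]; exact card_filter_le _ _

namespace Ideal

variable {R : Type*} [CommRing R] {𝔪 : Ideal R} [𝔪.IsMaximal] {s : Finset R}

lemma length_map_mkQ_pow_le (hs : span (s : Set R) = 𝔪) (n : ℕ) :
    Module.length R (Submodule.map (𝔪 ^ (n + 1)).mkQ (𝔪 ^ n)) ≤ (#s).multichoose n := by
  classical
  have hpow : 𝔪 ^ n = span ↑(s ^ n) := by
    rw [← hs, span, Submodule.span_pow, coe_pow]
  have hmap : Submodule.map (𝔪 ^ (n + 1)).mkQ (𝔪 ^ n) =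
      Submodule.span R (((s ^ n).image (𝔪 ^ (n + 1)).mkQ : Finset (R ⧸ 𝔪 ^ (n + 1))) : Set _) := by
    rw [hpow, span, Submodule.map_span, coe_image]
  rw [hmap]
  refine (Submodule.length_span_le_card 𝔪 _ ?_).trans
    (Nat.cast_le.2 (card_image_le.trans (card_pow_le_multichoose s n)))
  simp only [mem_image]
  rintro r hr _ ⟨y, hy, rfl⟩
  rw [← map_smul, Submodule.mkQ_apply, Submodule.Quotient.mk_eq_zero, smul_eq_mul, pow_succ']
  exact mul_mem_mul hr (hpow ▸ subset_span hy)

lemma length_quotient_pow_le (hs : span (s : Set R) = 𝔪) (n : ℕ) :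
    Module.length R (R ⧸ 𝔪 ^ n) ≤ ∑ j ∈ range n, (#s).multichoose j := by
  induction n with
  | zero => simp [Module.length_eq_zero]
  | succ n ih =>
    rw [Module.length_quotient_eq_add (pow_le_pow_right n.le_succ), sum_range_succ, Nat.cast_add]
    exact (add_le_add (length_map_mkQ_pow_le hs n) ih).trans_eq (add_comm _ _)

lemma coheight_le_choose_of_pow_le (hs : span (s : Set R) = 𝔪) {n : ℕ} (hn : n ≠ 0) {I : Ideal R}
    (hI : 𝔪 ^ n ≤ I) : Order.coheight I ≤ (#s - 1 + n).choose #s :=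
  calc Order.coheight I ≤ Order.coheight (𝔪 ^ n) := Order.coheight_anti hI
    _ = Module.length R (R ⧸ 𝔪 ^ n) := Module.length_quotient.symm
    _ ≤ ∑ j ∈ range n, (#s).multichoose j := length_quotient_pow_le hs n
    _ = (#s - 1 + n).choose #s := by rw [Nat.sum_range_multichoose_eq_choose _ hn]

end Ideal

namespace Order

variable {ι α : Type*} [LinearOrder ι] [PartialOrder α] [OrderTop α] {f : ι → α} {s : Set ι}

lemma card_add_one_le_coheight (hf : ∀ i ∈ s, ∀ j, i < j → f j < f i)
    (htop : ∀ i ∈ s, f i ≠ ⊤) (F : Finset ι) (hFs : ↑F ⊆ s) {j : ι} (hj : f j ≠ ⊤)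
    (hFj : ∀ i ∈ F, i < j) : #F + 1 ≤ coheight (f j) := by
  induction F using Finset.induction_on_max generalizing j with
  | empty => simpa [one_le_iff_ne_zero] using hj
  | insert a F haF ih =>
    have ha : a ∈ s := hFs (mem_insert_self a F)
    rw [card_insert_of_notMem fun h => (haF a h).false, Nat.cast_add_one]
    calc (#F : ℕ∞) + 1 + 1 ≤ coheight (f a) + 1 := by
          gcongr
          exact ih (fun x hx => hFs (mem_insert_of_mem hx)) (htop a ha) haF
      _ ≤ coheight (f j) := coheight_add_one_le (hf a ha j (hFj a (mem_insert_self a F)))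

lemma encard_add_one_le_coheight (hf : ∀ i ∈ s, ∀ j, i < j → f j < f i)
    (htop : ∀ i ∈ s, f i ≠ ⊤) {t : Set ι} (hts : t ⊆ s) {j : ι} (hj : f j ≠ ⊤)
    (htj : ∀ i ∈ t, i < j) : t.encard + 1 ≤ coheight (f j) := by
  by_cases ht : t.Finite
  · obtain ⟨F, rfl⟩ := ht.exists_finset_coe
    rw [Set.encard_coe_eq_coe_finsetCard]
    exact card_add_one_le_coheight hf htop F hts hj htj
  · rw [Set.Infinite.encard_eq ht, top_add, top_le_iff, ENat.eq_top_iff_forall_gt]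
    intro k
    obtain ⟨F, hFt, rfl⟩ := Set.Infinite.exists_subset_card_eq ht k
    exact (ENat.add_one_le_iff (ENat.natCast_ne_top _)).1 <|
      card_add_one_le_coheight hf htop F (hFt.trans hts) hj fun i hi => htj i (hFt hi)

end Order

namespace AddValuation

variable {R Γ₀ : Type*} [CommRing R] [LinearOrderedAddCommMonoidWithTop Γ₀]
  (v : AddValuation R Γ₀) (hv : ∀ r, 0 ≤ v r)

def geIdeal (γ : Γ₀) : Ideal R where
  carrier := {r | γ ≤ v r}
  add_mem' ha hb := (le_min ha hb).trans (v.map_add _ _)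
  zero_mem' := by simp
  smul_mem' c x hx := by
    simpa [v.map_mul] using add_le_add (hv c) (show γ ≤ v x from hx)

variable {v hv}

@[simp]
lemma mem_geIdeal {γ : Γ₀} {r : R} : r ∈ v.geIdeal hv γ ↔ γ ≤ v r :=
  Iff.rfl

lemma geIdeal_lt_geIdeal {r : R} {δ : Γ₀} (h : v r < δ) : v.geIdeal hv δ < v.geIdeal hv (v r) :=
  SetLike.lt_iff_le_and_exists.2
    ⟨fun _ hx => h.le.trans (mem_geIdeal.1 hx), r, le_rfl, not_le.2 h⟩

lemma geIdeal_ne_top {γ : Γ₀} (h : 0 < γ) : v.geIdeal hv γ ≠ ⊤ :=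
  (Ideal.ne_top_iff_one _).2 fun h1 => (mem_geIdeal.1 h1).not_gt (v.map_one ▸ h)

lemma mul_geIdeal_le (γ δ : Γ₀) : v.geIdeal hv γ * v.geIdeal hv δ ≤ v.geIdeal hv (γ + δ) :=
  Ideal.mul_le.2 fun a ha b hb => by
    simpa [v.map_mul] using add_le_add (mem_geIdeal.1 ha) (mem_geIdeal.1 hb)

lemma pow_le_geIdeal_nsmul {I : Ideal R} {γ : Γ₀} (h : I ≤ v.geIdeal hv γ) :
    ∀ n : ℕ, I ^ n ≤ v.geIdeal hv (n • γ)
  | 0 => by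
    rw [pow_zero, zero_nsmul, Ideal.one_eq_top]
    exact fun r _ => hv r
  | n + 1 => by
    rw [pow_succ, succ_nsmul]
    exact (Ideal.mul_mono (pow_le_geIdeal_nsmul h n) h).trans (mul_geIdeal_le _ _)

end AddValuation

theorem regular_semigroup_card_lt_choose_general
    (R : Type*) [CommRing R] [IsLocalRing R]
    (d : ℕ)
    (hreg : ∃ s : Finset R, s.card = d ∧ Ideal.span (s : Set R) = IsLocalRing.maximalIdeal R)
    (Γ : Type*) [AddCommGroup Γ] [LinearOrder Γ] [IsOrderedAddMonoid Γ]
    (ν : AddValuation (FractionRing R) (WithTop Γ))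
    (hge : ∀ r : R, 0 ≤ ν (algebraMap R (FractionRing R) r))
    (hdom : ∀ r : R, r ∈ IsLocalRing.maximalIdeal R ↔
      0 < ν (algebraMap R (FractionRing R) r))
    (S : Set Γ)
    (hSdef : S = {γ : Γ | ∃ f : R, f ∈ IsLocalRing.maximalIdeal R ∧ f ≠ 0 ∧
      ν (algebraMap R (FractionRing R) f) = (γ : WithTop Γ)})
    (s₀ : Γ) (hs₀S : s₀ ∈ S) (hs₀min : ∀ x ∈ S, s₀ ≤ x) :
    ∀ n : ℕ, 0 < n →
      (S ∩ Set.Ioo 0 (n • s₀)).encard < (((d - 1 + n).choose d : ℕ) : ℕ∞) := by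
  intro n hn
  obtain ⟨s, rfl, hs⟩ := hreg
  set v := ν.comap (algebraMap R (FractionRing R))
  let J : Γ → Ideal R := fun γ => v.geIdeal hge γ
  have hS_pos : ∀ γ ∈ S, 0 < γ := by
    intro γ hγ
    obtain ⟨f, hf𝔪, -, hfγ⟩ := hSdef ▸ hγ
    exact WithTop.coe_pos.1 (hfγ ▸ (hdom f).1 hf𝔪)
  have hJ_lt : ∀ γ ∈ S, ∀ δ, γ < δ → J δ < J γ := by
    intro γ hγ δ hγδ
    obtain ⟨f, -, -, hfγ⟩ := hSdef ▸ hγ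
    have : v f = γ := hfγ
    simpa only [J, ← this] using AddValuation.geIdeal_lt_geIdeal (this ▸ WithTop.coe_lt_coe.2 hγδ)
  have h𝔪 : IsLocalRing.maximalIdeal R ≤ J s₀ := by
    intro r hr
    by_cases hr0 : r = 0
    · simp [J, hr0]
    change (s₀ : WithTop Γ) ≤ v r
    cases h : v r with
    | top => exact le_top
    | coe γ => exact WithTop.coe_le_coe.2 (hs₀min γ (hSdef ▸ ⟨r, hr, hr0, h⟩))
  have hchain := Order.encard_add_one_le_coheight (f := J) (t := S ∩ Set.Ioo 0 (n • s₀)) hJ_lt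
    (fun γ hγ => AddValuation.geIdeal_ne_top (WithTop.coe_pos.2 (hS_pos γ hγ)))
    Set.inter_subset_left
    (AddValuation.geIdeal_ne_top (WithTop.coe_pos.2 (nsmul_pos (hS_pos s₀ hs₀S) hn.ne')))
    (fun γ hγ => hγ.2.2)
  have hcolength := Ideal.coheight_le_choose_of_pow_le hs hn.ne'
    (by simpa [J] using AddValuation.pow_le_geIdeal_nsmul h𝔪 n)
  exact (ENat.add_one_le_iff' (ENat.natCast_ne_top _)).1 (hchain.trans hcolength)

/-- **Corollary 2.** Let `R` be a regular local ring of dimension `d` (a Noetherian local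
domain whose maximal ideal is generated by `d` elements, `d` being the Krull dimension)
dominated by a valuation `ν`, and let `s₀` be the smallest element of `S^R(ν)`.
Then `|S^R(ν) ∩ (0, n·s₀)| < (d-1+n).choose d` for all positive natural numbers `n`. -/
theorem regular_semigroup_card_lt_choose
    (R : Type*) [CommRing R] [IsDomain R] [IsLocalRing R] [IsNoetherianRing R]
    (d : ℕ) (hdim : ringKrullDim R = d)
    (hreg : ∃ s : Finset R, s.card = d ∧ Ideal.span (s : Set R) = IsLocalRing.maximalIdeal R)
    (Γ : Type*) [AddCommGroup Γ] [LinearOrder Γ] [IsOrderedAddMonoid Γ]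
    (ν : AddValuation (FractionRing R) (WithTop Γ))
    (hge : ∀ r : R, 0 ≤ ν (algebraMap R (FractionRing R) r))
    (hdom : ∀ r : R, r ∈ IsLocalRing.maximalIdeal R ↔
      0 < ν (algebraMap R (FractionRing R) r))
    (S : Set Γ)
    (hSdef : S = {γ : Γ | ∃ f : R, f ∈ IsLocalRing.maximalIdeal R ∧ f ≠ 0 ∧
      ν (algebraMap R (FractionRing R) f) = (γ : WithTop Γ)})
    (s₀ : Γ) (hs₀S : s₀ ∈ S) (hs₀min : ∀ x ∈ S, s₀ ≤ x) :
    ∀ n : ℕ, 0 < n →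
      (S ∩ Set.Ioo 0 (n • s₀)).encard < (((d - 1 + n).choose d : ℕ) : ℕ∞) :=
  regular_semigroup_card_lt_choose_general R d hreg Γ ν hge hdom S hSdef s₀ hs₀S hs₀min
end

section
/- There exists a well-ordered subsemigroup U of the positive rationals, of ordinal type ω, such that U is not equal to S^R(ν) for any valuation ν dominating any Noetherian local domain R. -/
/-!
Let `ν` be nonnegative on a Noetherian local ring `R` with values `≥ 1` on its maximal ideal `m`,
and let `m` be generated by `μ` elements. Distinct values `γ < n` of `ν` give a strictly
decreasing chain of valuation ideals `{f | γ ≤ ν f}`, all containing `m ^ n`, so there are at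
most `length (R ⧸ m ^ n) ≤ ∑ i < n, μ ^ i` of them. The semigroup of rationals `q ≥ 1` with
`q * 2 ^ ⌈q⌉² ∈ ℤ` has `2 ^ k²` elements in `(k - 1, k]`, which outgrows this exponential bound.
-/

open Submodule Pointwise IsLocalRing

section Length

variable {R M : Type*} [CommRing R] [AddCommGroup M] [Module R M]

theorem Module.length_le_encard_of_isTorsionBySet {m : Ideal R} [m.IsMaximal]
    (hM : Module.IsTorsionBySet R M m) {s : Set M} (hs : span R s = ⊤) :
    Module.length R M ≤ s.encard := by
  let := Ideal.Quotient.field m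
  let := hM.module
  rw [Module.length_eq_of_surjective (S := R) (R := R ⧸ m) Ideal.Quotient.mk_surjective,
    Module.length_eq_rank]
  have hs' : span (R ⧸ m) s = ⊤ :=
    eq_top_iff.mpr fun x _ => span_le_restrictScalars R (R ⧸ m) s (hs ▸ mem_top)
  have := rank_span_le (R := R ⧸ m) s
  rw [hs', rank_top] at this
  exact (Cardinal.toENat.monotone' this).trans_eq rfl

theorem Module.length_quotient_le_encard_add {m : Ideal R} [m.IsMaximal] {p : Submodule R M}
    {s : Set M} (hp : p ≤ span R s) (hm : m • span R s ≤ p) :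
    Module.length R (M ⧸ p) ≤ s.encard + Module.length R (M ⧸ span R s) := by
  set K := span R (p.mkQ '' s)
  have hK : K = LinearMap.ker (factor hp) := by
    rw [ker_mapQ, comap_id, map_span]
  rw [Module.length_eq_add_of_exact K.subtype (factor hp) K.injective_subtype
    (factor_surjective hp) (by rw [LinearMap.exact_iff, range_subtype, hK])]
  gcongr
  have hK_tors : Module.IsTorsionBySet R K m := by
    rintro ⟨x, hx⟩ ⟨a, ha⟩
    obtain ⟨y, hy, rfl⟩ := mem_map.mp (show x ∈ map p.mkQ (span R s) by rwa [map_span])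
    ext
    simpa [← Submodule.Quotient.mk_smul, Submodule.Quotient.mk_eq_zero]
      using hm (smul_mem_smul ha hy)
  calc Module.length R K ≤ ((↑) ⁻¹' (p.mkQ '' s) : Set K).encard :=
        Module.length_le_encard_of_isTorsionBySet hK_tors span_span_coe_preimage
    _ ≤ (p.mkQ '' s).encard := Set.encard_preimage_val_le_encard_right _ _
    _ ≤ s.encard := Set.encard_image_le _ _

theorem Ideal.length_quotient_pow_le_s2 {m : Ideal R} [m.IsMaximal] {G : Finset R}
    (hG : Ideal.span (G : Set R) = m) (n : ℕ) :
    Module.length R (R ⧸ m ^ n) ≤ (∑ i ∈ Finset.range n, G.card ^ i : ℕ) := by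
  classical
  induction n with
  | zero => simp [Module.length_eq_zero]
  | succ n ih =>
    have hspan : Submodule.span R (G ^ n : Finset R) = m ^ n := by
      rw [Finset.coe_pow, ← Submodule.span_pow, ← hG]
    have := Module.length_quotient_le_encard_add (m := m) (p := m ^ (n + 1))
      (s := (G ^ n : Finset R)) (hspan ▸ Ideal.pow_le_pow_right n.le_succ)
      (by rw [hspan, smul_eq_mul, ← pow_succ'])
    rw [hspan, Set.encard_coe_eq_coe_finsetCard] at this
    calc _ ≤ _ := this
      _ ≤ _ := add_le_add (Nat.cast_le.mpr G.card_pow_le) ih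
      _ = _ := by rw [Finset.sum_range_succ, Nat.cast_add, add_comm]

end Length

theorem Finset.card_le_coheight_of_strictAntiOn {α β : Type*} [LinearOrder α] [Preorder β]
    (A : Finset α) {φ : α → β} (hφ : StrictAntiOn φ A) {b : β} (hb : ∀ a ∈ A, b < φ a) :
    (A.card : ℕ∞) ≤ Order.coheight b := by
  classical
  induction A using Finset.induction_on_max generalizing b with
  | empty => simp
  | insert a s has ih =>
    have ha : a ∈ insert a s := mem_insert_self a s
    have hs : ∀ x ∈ s, φ a < φ x := fun x hx =>
      hφ (mem_insert_of_mem hx) ha (has x hx)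
    rw [card_insert_of_notMem fun h => lt_irrefl a (has a h), Nat.cast_succ]
    calc (s.card : ℕ∞) + 1 ≤ Order.coheight (φ a) + 1 := by
          gcongr
          exact ih (hφ.mono (by simp)) hs
      _ ≤ Order.coheight b := Order.coheight_add_one_le (hb a ha)

namespace AddValuation

variable {R Γ₀ : Type*} [CommRing R] [LinearOrderedAddCommMonoidWithTop Γ₀]
  (v : AddValuation R Γ₀) (hv : ∀ r, 0 ≤ v r)

def valuationIdeal (γ : Γ₀) : Ideal R where
  carrier := {r | γ ≤ v r}
  add_mem' {a b} ha hb := (le_min ha hb).trans (v.map_add a b)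
  zero_mem' := by simp
  smul_mem' c x hx := by
    simpa [v.map_mul] using hx.trans (le_add_of_nonneg_left (hv c))

variable {v hv}

@[simp]
theorem mem_valuationIdeal {γ : Γ₀} {r : R} : r ∈ v.valuationIdeal hv γ ↔ γ ≤ v r := Iff.rfl

theorem valuationIdeal_mul_le (γ δ : Γ₀) :
    v.valuationIdeal hv γ * v.valuationIdeal hv δ ≤ v.valuationIdeal hv (γ + δ) :=
  Ideal.mul_le.mpr fun r hr s hs => by
    simpa [v.map_mul] using add_le_add hr hs

theorem pow_le_valuationIdeal {I : Ideal R} {γ : Γ₀} (hI : I ≤ v.valuationIdeal hv γ) (n : ℕ) :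
    I ^ n ≤ v.valuationIdeal hv (n • γ) := by
  induction n with
  | zero =>
    intro r _
    simpa using hv r
  | succ n ih =>
    rw [pow_succ, succ_nsmul]
    exact (Ideal.mul_mono ih hI).trans (valuationIdeal_mul_le _ _)

theorem valuationIdeal_lt_of_lt {γ δ : Γ₀} (hγ : γ ∈ Set.range v) (h : γ < δ) :
    v.valuationIdeal hv δ < v.valuationIdeal hv γ := by
  obtain ⟨r, rfl⟩ := hγ
  refine lt_of_le_of_ne (fun s hs => h.le.trans hs) fun heq => ?_
  have : r ∈ v.valuationIdeal hv δ := heq ▸ le_rfl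
  exact h.not_ge this

theorem card_le_length_quotient_valuationIdeal {δ : Γ₀} (A : Finset Γ₀)
    (hA : ∀ γ ∈ A, γ ∈ Set.range v ∧ γ < δ) :
    (A.card : ℕ∞) ≤ Module.length R (R ⧸ v.valuationIdeal hv δ) := by
  rw [Module.length_quotient]
  refine A.card_le_coheight_of_strictAntiOn (φ := v.valuationIdeal hv)
    (fun γ hγ γ' _ h => valuationIdeal_lt_of_lt (hA γ hγ).1 h)
    fun γ hγ => valuationIdeal_lt_of_lt (hA γ hγ).1 (hA γ hγ).2

theorem card_le_sum_range_pow {m : Ideal R} [m.IsMaximal] {G : Finset R}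
    (hG : Ideal.span (G : Set R) = m) {c : Γ₀} (hm : m ≤ v.valuationIdeal hv c) (n : ℕ)
    (A : Finset Γ₀) (hA : ∀ γ ∈ A, γ ∈ Set.range v ∧ γ < n • c) :
    A.card ≤ ∑ i ∈ Finset.range n, G.card ^ i := by
  have hpow := pow_le_valuationIdeal hm n
  exact_mod_cast (card_le_length_quotient_valuationIdeal A hA).trans <|
    (Module.length_le_of_surjective _ (factor_surjective hpow)).trans
      (Ideal.length_quotient_pow_le_s2 hG n)

end AddValuation

def dyadicSemigroup : Set ℚ := {q | 1 ≤ q ∧ ∃ z : ℤ, q * 2 ^ (⌈q⌉₊ ^ 2) = z}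

theorem exists_int_eq_mul_two_pow_of_mem_dyadicSemigroup {q y : ℚ} (hq : q ∈ dyadicSemigroup)
    (hqy : q ≤ y) : ∃ z : ℤ, q * 2 ^ (⌈y⌉₊ ^ 2) = z := by
  obtain ⟨-, z, hz⟩ := hq
  obtain ⟨c, hc⟩ := Nat.exists_eq_add_of_le (Nat.pow_le_pow_left (Nat.ceil_mono hqy) 2)
  exact ⟨z * 2 ^ c, by rw [hc, pow_add, ← mul_assoc, hz]; push_cast; rfl⟩

theorem dyadicSemigroup_add_mem {x y : ℚ} (hx : x ∈ dyadicSemigroup)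
    (hy : y ∈ dyadicSemigroup) : x + y ∈ dyadicSemigroup := by
  obtain ⟨a, ha⟩ := exists_int_eq_mul_two_pow_of_mem_dyadicSemigroup (y := x + y) hx
    (by linarith [hy.1])
  obtain ⟨b, hb⟩ := exists_int_eq_mul_two_pow_of_mem_dyadicSemigroup (y := x + y) hy
    (by linarith [hx.1])
  exact ⟨by linarith [hx.1, hy.1], a + b, by rw [add_mul, ha, hb]; push_cast; rfl⟩

theorem natCast_mem_dyadicSemigroup {k : ℕ} (hk : 1 ≤ k) : (k : ℚ) ∈ dyadicSemigroup :=
  ⟨by exact_mod_cast hk, k * 2 ^ (k ^ 2), by simp⟩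

theorem dyadicSemigroup_infinite : dyadicSemigroup.Infinite :=
  Set.infinite_of_injective_forall_mem (f := fun k : ℕ => ((k + 1 : ℕ) : ℚ))
    (fun a b h => by simpa using h) fun k => natCast_mem_dyadicSemigroup (Nat.le_add_left 1 k)

theorem dyadicSemigroup_inter_Iio_finite (x : ℚ) : (dyadicSemigroup ∩ Set.Iio x).Finite := by
  set E := ⌈x⌉₊ ^ 2
  refine ((Set.finite_Icc 0 ⌈x * 2 ^ E⌉).image fun z : ℤ => (z : ℚ) / 2 ^ E).subset ?_
  rintro q ⟨hq, hqx : q < x⟩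
  obtain ⟨z, hz⟩ : ∃ z : ℤ, q * 2 ^ E = z :=
    exists_int_eq_mul_two_pow_of_mem_dyadicSemigroup hq hqx.le
  have hzx : (z : ℚ) ≤ x * 2 ^ E := hz ▸ mul_le_mul_of_nonneg_right hqx.le (by positivity)
  refine ⟨z, ⟨?_, ?_⟩, ?_⟩
  · have := hq.1
    exact_mod_cast hz ▸ (by positivity : 0 ≤ q * 2 ^ E)
  · exact_mod_cast hzx.trans (Int.le_ceil _)
  · show (z : ℚ) / 2 ^ E = q
    rw [← hz]; field_simp

theorem exists_finset_dyadicSemigroup_le_card_eq {k : ℕ} (hk : 2 ≤ k) :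
    ∃ A : Finset ℚ, A.card = 2 ^ (k ^ 2) ∧ ∀ q ∈ A, q ∈ dyadicSemigroup ∧ q ≤ k := by
  have h2 : (0 : ℚ) < 2 ^ (k ^ 2) := by positivity
  refine ⟨(Finset.range (2 ^ (k ^ 2))).image fun j : ℕ => (k - j / 2 ^ (k ^ 2) : ℚ), ?_, ?_⟩
  · rw [Finset.card_image_of_injective _ fun i j hij => by simpa [h2.ne'] using hij,
      Finset.card_range]
  · simp only [Finset.mem_image, Finset.mem_range]
    rintro _ ⟨j, hj, rfl⟩
    have hj0 : (0 : ℚ) ≤ j / 2 ^ (k ^ 2) := by positivity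
    have hj1 : (j : ℚ) / 2 ^ (k ^ 2) < 1 := by
      rw [div_lt_one h2]; exact_mod_cast hj
    have hceil : ⌈(k : ℚ) - j / 2 ^ (k ^ 2)⌉₊ = k := by
      rw [Nat.ceil_eq_iff (by omega), Nat.cast_sub (by omega)]
      constructor <;> push_cast <;> linarith
    refine ⟨⟨?_, (k * 2 ^ (k ^ 2) - j : ℤ), ?_⟩, by linarith⟩
    · have : (2 : ℚ) ≤ k := by exact_mod_cast hk
      linarith
    · rw [hceil]; field_simp; push_cast; ring

theorem sum_range_pow_lt_two_pow_sq (μ : ℕ) :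
    ∑ i ∈ Finset.range (μ + 3), μ ^ i < 2 ^ ((μ + 2) ^ 2) :=
  calc ∑ i ∈ Finset.range (μ + 3), μ ^ i ≤ ∑ i ∈ Finset.range (μ + 3), (μ + 2) ^ i :=
        Finset.sum_le_sum fun i _ => Nat.pow_le_pow_left (by omega) i
    _ < (μ + 2) ^ (μ + 3) := Nat.geomSum_lt (by omega) fun i hi => Finset.mem_range.mp hi
    _ ≤ (2 ^ (μ + 1)) ^ (μ + 3) := Nat.pow_le_pow_left (Nat.lt_two_pow_self (n := μ + 1)) _
    _ ≤ 2 ^ ((μ + 2) ^ 2) := by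
        rw [← pow_mul]
        exact Nat.pow_le_pow_right (by norm_num) (by nlinarith)

theorem AddValuation.exists_mem_dyadicSemigroup_notMem_range {R : Type*} [CommRing R]
    [IsLocalRing R] [IsNoetherianRing R] {v : AddValuation R (WithTop ℚ)} {hv : ∀ r, 0 ≤ v r}
    (hm : maximalIdeal R ≤ v.valuationIdeal hv 1) :
    ∃ q ∈ dyadicSemigroup, (q : WithTop ℚ) ∉ Set.range v := by
  by_contra! hU
  obtain ⟨G, hG⟩ := (IsNoetherian.noetherian (maximalIdeal R) : (maximalIdeal R).FG)
  obtain ⟨A, hAcard, hA⟩ := exists_finset_dyadicSemigroup_le_card_eq (k := G.card + 2) (by omega)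
  have hcount := v.card_le_sum_range_pow hG hm (G.card + 3) (A.map Function.Embedding.coeWithTop)
    (by
      simp only [Finset.mem_map, Function.Embedding.coeWithTop_apply]
      rintro _ ⟨q, hq, rfl⟩
      refine ⟨hU q (hA q hq).1, ?_⟩
      rw [nsmul_one, ← WithTop.coe_natCast, WithTop.coe_lt_coe]
      have := (hA q hq).2
      push_cast at this ⊢
      linarith)
  rw [Finset.card_map, hAcard] at hcount
  exact (sum_range_pow_lt_two_pow_sq G.card).not_ge hcount

/-- **Corollary 3.** There exists a well ordered subsemigroup `U` of `ℚ₊` of ordinal type `ω`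
(i.e. `U` is infinite and every initial segment of `U` is finite) such that `U ≠ S^R(ν)` for
any valuation `ν` dominating a Noetherian local domain `R`. -/
theorem exists_semigroup_not_value_semigroup :
    ∃ U : Set ℚ,
      U ⊆ Set.Ioi 0 ∧
      (∀ x ∈ U, ∀ y ∈ U, x + y ∈ U) ∧
      U.Infinite ∧
      (∀ x : ℚ, (U ∩ Set.Iio x).Finite) ∧
      ∀ (R : Type) (_ : CommRing R) (_ : IsDomain R) (_ : IsLocalRing R)
        (_ : IsNoetherianRing R)
        (ν : AddValuation (FractionRing R) (WithTop ℚ)),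
        (∀ r : R, 0 ≤ ν (algebraMap R (FractionRing R) r)) →
        (∀ r : R, r ∈ IsLocalRing.maximalIdeal R ↔
          0 < ν (algebraMap R (FractionRing R) r)) →
        {γ : ℚ | ∃ f : R, f ∈ IsLocalRing.maximalIdeal R ∧ f ≠ 0 ∧
          ν (algebraMap R (FractionRing R) f) = (γ : WithTop ℚ)} ≠ U := by
  refine ⟨dyadicSemigroup, fun q hq => zero_lt_one.trans_le hq.1,
    fun x hx y hy => dyadicSemigroup_add_mem hx hy, dyadicSemigroup_infinite,
    dyadicSemigroup_inter_Iio_finite, ?_⟩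
  rintro R _ _ _ _ ν hν - hS
  let v := ν.comap (algebraMap R (FractionRing R))
  have hv : ∀ r, 0 ≤ v r := hν
  have hm : maximalIdeal R ≤ v.valuationIdeal hv 1 := by
    intro f hf
    obtain rfl | hf0 := eq_or_ne f 0
    · simp
    obtain ⟨γ, hγ⟩ := WithTop.ne_top_iff_exists.mp <| ν.ne_top_iff.mpr <|
      (map_ne_zero_iff _ (IsFractionRing.injective R (FractionRing R))).mpr hf0
    have hγU : γ ∈ dyadicSemigroup := hS ▸ ⟨f, hf, hf0, hγ.symm⟩
    show (1 : WithTop ℚ) ≤ ν (algebraMap R (FractionRing R) f)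
    rw [← hγ]
    exact_mod_cast hγU.1
  obtain ⟨q, hqU, hq⟩ := AddValuation.exists_mem_dyadicSemigroup_notMem_range hm
  obtain ⟨f, -, -, hf⟩ : q ∈ {γ : ℚ | _} := hS ▸ hqU
  exact hq ⟨f, hf⟩
end

section
/- Let a₁,…,a_k be positive rationals. Set G₀ = ℤ, and for 1 ≤ i ≤ k let S_i be the subsemigroup of ℚ_{≥0} generated by 1, a₁, …, a_i, let G_i = S_i + (−S_i) be the group it generates, q_i = [G_i : G_{i−1}], and x_i = (q₁−1)a₁ + ⋯ + (q_i−1)a_i. Then for all 1 ≤ i ≤ k, |S_i ∩ (x_i − 1, x_i]| ≥ q₁⋯q_i. -/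
/-! Induct on `i`. If `T ⊆ S_{i-1} ∩ (x_{i-1} - 1, x_{i-1}]`, shift each of the `q_i * |T|` elements
`s + m a_i` (`s ∈ T`, `0 ≤ m < q_i`) by the natural number that brings it into
`(x_i - 1, x_i]`; the results stay in `S_i`. They are pairwise distinct: a coincidence puts
`(m - m') a_i` into `G_{i-1}`, so `q_i ∣ m - m'` because `q_i` is the order of `a_i` modulo
`G_{i-1}`, hence `m = m'`, and then `s - s'` is an integer of absolute value `< 1`. -/
open Set

theorem AddSubgroup.relIndex_sup_zmultiples {G : Type*} [AddGroup G] (A : AddSubgroup G)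
    [A.Normal] (α : G) : A.relIndex (A ⊔ zmultiples α) = addOrderOf (α : G ⧸ A) := by
  have h := relIndex_ker (K := zmultiples α) (QuotientAddGroup.mk' A)
  rw [QuotientAddGroup.ker_mk'] at h
  rw [relIndex_sup_left, h, AddMonoidHom.map_zmultiples, Nat.card_zmultiples,
    QuotientAddGroup.coe_mk']

theorem AddSubgroup.zsmul_mem_iff_relIndex_sup_zmultiples_dvd {G : Type*} [AddGroup G]
    (A : AddSubgroup G) [A.Normal] (α : G) (z : ℤ) :
    z • α ∈ A ↔ (A.relIndex (A ⊔ zmultiples α) : ℤ) ∣ z := by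
  rw [relIndex_sup_zmultiples, addOrderOf_dvd_iff_zsmul_eq_zero, ← QuotientAddGroup.mk_zsmul,
    QuotientAddGroup.eq_zero_iff]

theorem AddSubgroup.closure_addSubmonoidClosure {G : Type*} [AddGroup G] (s : Set G) :
    closure (AddSubmonoid.closure s : Set G) = closure s :=
  le_antisymm ((closure_le _).2 (le_closure_toAddSubmonoid s))
    (closure_mono AddSubmonoid.subset_closure)

section ArchimedeanGroup

variable {M : Type*} [AddCommGroup M] [LinearOrder M] [IsOrderedAddMonoid M] [Archimedean M]
  {p : M}

theorem toIocDiv_nonpos_of_le (hp : 0 < p) {a b : M} (hb : b ≤ a + p) :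
    toIocDiv hp a b ≤ 0 := by
  by_contra! hpos
  have hp_le : p ≤ toIocDiv hp a b • p := by
    simpa using zsmul_le_zsmul_left hp.le (show (1 : ℤ) ≤ toIocDiv hp a b by omega)
  have hle : b - toIocDiv hp a b • p ≤ a :=
    (sub_le_sub_left hp_le b).trans (sub_le_iff_le_add.2 hb)
  exact (sub_toIocDiv_zsmul_mem_Ioc hp a b).1.not_ge hle

theorem toIocMod_mem_addSubmonoid_of_le (hp : 0 < p) {S : AddSubmonoid M} (hpS : p ∈ S)
    {a b : M} (hbS : b ∈ S) (hb : b ≤ a + p) : toIocMod hp a b ∈ S := by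
  obtain ⟨n, hn⟩ := Int.exists_eq_neg_ofNat (toIocDiv_nonpos_of_le hp hb)
  rw [← self_sub_toIocDiv_zsmul, hn, neg_zsmul, sub_neg_eq_add, natCast_zsmul]
  exact add_mem hbS (AddSubmonoid.nsmul_mem S hpS n)

theorem eq_of_mem_Ioc_of_sub_eq_zsmul (hp : 0 < p) {a b c : M} (hb : b ∈ Ioc a (a + p))
    (hc : c ∈ Ioc a (a + p)) {n : ℤ} (h : c - b = n • p) : b = c := by
  rw [← (toIocMod_eq_self hp).2 hb, ← (toIocMod_eq_self hp).2 hc]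
  exact (toIocMod_eq_toIocMod hp).2 ⟨n, h⟩

theorem encard_inter_Ioc_mul_le_encard_inter_Ioc (hp : 0 < p) {S S' : AddSubmonoid M}
    (hpS : p ∈ S) (hSS' : S ≤ S') {α : M} (hα : 0 ≤ α) (hαS' : α ∈ S') {q : ℕ}
    (hq : ∀ z : ℤ, z • α ∈ AddSubgroup.closure (S : Set M) → (q : ℤ) ∣ z) (x : M) :
    ((S : Set M) ∩ Ioc (x - p) x).encard * q ≤
      ((S' : Set M) ∩ Ioc (x + ((q : ℤ) - 1) • α - p) (x + ((q : ℤ) - 1) • α)).encard := by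
  set x' := x + ((q : ℤ) - 1) • α
  set D := ((S : Set M) ∩ Ioc (x - p) x) ×ˢ (Finset.range q : Set ℕ)
  set f : M × ℕ → M := fun sm => toIocMod hp (x' - p) (sm.1 + sm.2 • α)
  have hmaps : MapsTo f D ((S' : Set M) ∩ Ioc (x' - p) x') := by
    rintro ⟨s, m⟩ ⟨⟨hsS, -, hsx⟩, hm⟩
    rw [Finset.mem_coe, Finset.mem_range] at hm
    have hmα : m • α ≤ ((q : ℤ) - 1) • α := by
      rw [← natCast_zsmul]; exact zsmul_le_zsmul_left hα (by omega)
    refine ⟨toIocMod_mem_addSubmonoid_of_le hp (hSS' hpS)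
      (add_mem (hSS' hsS) (AddSubmonoid.nsmul_mem S' hαS' m)) ?_, ?_⟩
    · rw [sub_add_cancel]; exact add_le_add hsx hmα
    · simpa only [sub_add_cancel] using toIocMod_mem_Ioc hp (x' - p) (s + m • α)
  have hinj : InjOn f D := by
    rintro ⟨s, m⟩ ⟨⟨hsS, hs⟩, hm⟩ ⟨s', m'⟩ ⟨⟨hs'S, hs'⟩, hm'⟩ hf
    dsimp only at hsS hs hm hs'S hs' hm'
    rw [Finset.mem_coe, Finset.mem_range] at hm hm'
    obtain ⟨n, hn⟩ := (toIocMod_eq_toIocMod hp).1 hf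
    have hmem : ((m' : ℤ) - m) • α ∈ AddSubgroup.closure (S : Set M) := by
      have : ((m' : ℤ) - m) • α = n • p - (s' - s) := by
        rw [sub_zsmul, natCast_zsmul, natCast_zsmul, ← hn]; abel
      rw [this]
      exact sub_mem (zsmul_mem (AddSubgroup.subset_closure hpS) n)
        (sub_mem (AddSubgroup.subset_closure hs'S) (AddSubgroup.subset_closure hsS))
    have hmm' : m = m' := by
      have := Int.eq_zero_of_abs_lt_dvd (hq _ hmem) (by rw [abs_lt]; omega)
      omega
    subst hmm'
    rw [← sub_add_cancel x p, add_sub_cancel_right] at hs hs'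
    rw [eq_of_mem_Ioc_of_sub_eq_zsmul hp hs hs' (n := n) (by rw [← hn]; abel)]
  calc ((S : Set M) ∩ Ioc (x - p) x).encard * q = D.encard := by
        rw [encard_prod, encard_coe_eq_coe_finsetCard, Finset.card_range]
    _ = (f '' D).encard := hinj.encard_image.symm
    _ ≤ _ := encard_le_encard hmaps.image_subset

end ArchimedeanGroup

theorem setOf_one_le_le_succ (i : ℕ) :
    {j | 1 ≤ j ∧ j ≤ i + 1} = insert (i + 1) {j | 1 ≤ j ∧ j ≤ i} := by
  ext j
  simp only [mem_insert_iff, mem_ofPred_eq]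
  omega

theorem encard_inter_Ioc_mul_le_of_succ (a : ℕ → ℚ) (S : ℕ → AddSubmonoid ℚ)
    (hS : ∀ i, S i = AddSubmonoid.closure ({1} ∪ (a '' {j | 1 ≤ j ∧ j ≤ i})))
    (G : ℕ → AddSubgroup ℚ) (hG : ∀ i, G i = AddSubgroup.closure (S i : Set ℚ))
    (q : ℕ → ℕ) (hq : ∀ i, 1 ≤ i → q i = (G (i - 1)).relIndex (G i))
    (x : ℕ → ℚ) (hx : ∀ i, x i = ∑ j ∈ Finset.Icc 1 i, ((q j : ℚ) - 1) * a j)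
    (i : ℕ) (ha : 0 < a (i + 1)) :
    ((S i : Set ℚ) ∩ Ioc (x i - 1) (x i)).encard * q (i + 1) ≤
      ((S (i + 1) : Set ℚ) ∩ Ioc (x (i + 1) - 1) (x (i + 1))).encard := by
  have hgens : ({1} ∪ a '' {j | 1 ≤ j ∧ j ≤ i + 1} : Set ℚ) =
      insert (a (i + 1)) ({1} ∪ a '' {j | 1 ≤ j ∧ j ≤ i}) := by
    rw [setOf_one_le_le_succ, image_insert_eq, union_insert]
  have hone : (1 : ℚ) ∈ S i := hS i ▸ AddSubmonoid.subset_closure (.inl rfl)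
  have hSsucc : S i ≤ S (i + 1) := by
    rw [hS, hS, hgens]
    exact AddSubmonoid.closure_mono (subset_insert _ _)
  have haS : a (i + 1) ∈ S (i + 1) := by
    rw [hS, hgens]
    exact AddSubmonoid.subset_closure (mem_insert _ _)
  have hGsucc : G (i + 1) = G i ⊔ AddSubgroup.zmultiples (a (i + 1)) := by
    rw [hG, hG, hS, hS, AddSubgroup.closure_addSubmonoidClosure,
      AddSubgroup.closure_addSubmonoidClosure, hgens, insert_eq, AddSubgroup.closure_union,
      ← AddSubgroup.zmultiples_eq_closure, sup_comm]
  have hq_dvd (z : ℤ) (hz : z • a (i + 1) ∈ AddSubgroup.closure (S i : Set ℚ)) :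
      (q (i + 1) : ℤ) ∣ z := by
    rw [hq (i + 1) (by omega), Nat.add_sub_cancel, hGsucc]
    exact (AddSubgroup.zsmul_mem_iff_relIndex_sup_zmultiples_dvd _ _ _).1 (hG i ▸ hz)
  have hxsucc : x (i + 1) = x i + ((q (i + 1) : ℤ) - 1) • a (i + 1) := by
    rw [hx, hx, Finset.sum_Icc_succ_top (by omega), zsmul_eq_mul]
    push_cast
    rfl
  rw [hxsucc]
  exact encard_inter_Ioc_mul_le_encard_inter_Ioc one_pos hone hSsucc ha.le haS hq_dvd (x i)

/-- **Lemma (density), first part.** With `S_i` the submonoid of `ℚ≥0` generated by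
`1, a₁, …, a_i`, `G_i` the subgroup it generates (`G₀ = ℤ`), `q_i = [G_i : G_{i-1}]` and
`x_i = (q₁-1)a₁ + ⋯ + (q_i-1)a_i`, we have `|S_i ∩ (x_i - 1, x_i]| ≥ q₁⋯q_i` for `1 ≤ i ≤ k`. -/
theorem density_lemma
    (k : ℕ) (a : ℕ → ℚ) (ha : ∀ i, 1 ≤ i → i ≤ k → 0 < a i)
    (S : ℕ → AddSubmonoid ℚ)
    (hS : ∀ i, S i = AddSubmonoid.closure ({1} ∪ (a '' {j | 1 ≤ j ∧ j ≤ i})))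
    (G : ℕ → AddSubgroup ℚ)
    (hG : ∀ i, G i = AddSubgroup.closure (S i : Set ℚ))
    (q : ℕ → ℕ) (hq : ∀ i, 1 ≤ i → q i = (G (i - 1)).relIndex (G i))
    (x : ℕ → ℚ) (hx : ∀ i, x i = ∑ j ∈ Finset.Icc 1 i, ((q j : ℚ) - 1) * a j) :
    ∀ i, 1 ≤ i → i ≤ k →
      ((∏ j ∈ Finset.Icc 1 i, q j : ℕ) : ℕ∞) ≤
        ((S i : Set ℚ) ∩ Set.Ioc (x i - 1) (x i)).encard := by
  suffices h : ∀ i ≤ k, ((∏ j ∈ Finset.Icc 1 i, q j : ℕ) : ℕ∞) ≤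
      ((S i : Set ℚ) ∩ Set.Ioc (x i - 1) (x i)).encard from fun i _ hik => h i hik
  intro i hik
  induction i with
  | zero =>
    have hx0 : x 0 = 0 := by simp [hx]
    rw [Finset.Icc_eq_empty (by omega), Finset.prod_empty, Nat.cast_one,
      one_le_encard_iff_nonempty]
    exact ⟨0, (S 0).zero_mem, by simp [hx0]⟩
  | succ i ih =>
    rw [Finset.prod_Icc_succ_top (by omega), Nat.cast_mul]
    exact (mul_le_mul_left (ih (by omega)) _).trans
      (encard_inter_Ioc_mul_le_of_succ a S hS G hG q hq x hx i (ha (i + 1) (by omega) hik))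
end

section
/- If a is a positive rational with denominator q₁ (in lowest terms a = a₁/b with b = q₁ > 1), and S₁ is the submonoid of ℚ_{≥0} generated by 1 and a, then S₁ is the disjoint union of the ℕ-modules ℕ, a+ℕ, 2a+ℕ, …, (q₁−1)a+ℕ, and consequently |S₁ ∩ ((q₁−1)a − 1, (q₁−1)a]| = q₁. -/
/-!
Since `a.den * a = a.num` is an integer, `n * a` differs from `(n % a.den) * a` by a natural
number, so `n * a + m` lies in one of the classes `j * a + ℕ` with `j < a.den`. Conversely, if
`j * a + m = j' * a + m'` then `(j - j') * a` is an integer, hence `a.den ∣ j - j'` by coprimality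
of numerator and denominator, which forces `j = j'`. Each class `j * a + ℕ` meets the interval
`((a.den - 1) * a - 1, (a.den - 1) * a]`, which lies above `j * a` and has length one, in exactly
one point.
-/

namespace Rat

theorem den_dvd_of_intCast_mul_eq_intCast {a : ℚ} {k n : ℤ} (h : k * a = n) :
    (a.den : ℤ) ∣ k := by
  have hcop : IsCoprime (a.den : ℤ) a.num := by
    rw [Int.isCoprime_iff_gcd_eq_one, Int.gcd_comm]
    exact a.reduced
  refine hcop.dvd_of_dvd_mul_right ⟨n, ?_⟩
  have hq : (k * a.num : ℚ) = a.den * n := by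
    rw [← a.den_mul_eq_num, ← h]; ring
  exact_mod_cast hq

theorem eq_of_natCast_mul_add_natCast_eq {a : ℚ} {j j' m m' : ℕ} (hj : j < a.den)
    (hj' : j' < a.den) (h : j * a + m = j' * a + m') : j = j' := by
  have hdvd : (a.den : ℤ) ∣ (j : ℤ) - j' :=
    den_dvd_of_intCast_mul_eq_intCast (n := (m' : ℤ) - m) (by push_cast; linarith)
  have hzero := Int.eq_zero_of_abs_lt_dvd hdvd (by rw [abs_lt]; omega)
  omega

theorem natCast_mul_eq (a : ℚ) (n : ℕ) :
    (n : ℚ) * a = (n % a.den : ℕ) * a + (n / a.den : ℕ) * a.num := by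
  rw [← a.den_mul_eq_num]
  nth_rw 1 [← Nat.mod_add_div n a.den]
  push_cast; ring

theorem coe_closure_one_self {a : ℚ} (ha : 0 ≤ a) :
    (AddSubmonoid.closure {1, a} : Set ℚ) =
      ⋃ j ∈ Finset.range a.den, Set.range (fun m : ℕ => (j : ℚ) * a + m) := by
  ext x
  simp only [SetLike.mem_coe, AddSubmonoid.mem_closure_pair, nsmul_eq_mul, mul_one,
    Set.mem_iUnion, Finset.mem_range, Set.mem_range]
  constructor
  · have hnum : ((a.num.toNat : ℕ) : ℚ) = a.num :=
      mod_cast Int.toNat_of_nonneg (num_nonneg.mpr ha)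
    rintro ⟨m, n, rfl⟩
    refine ⟨n % a.den, Nat.mod_lt _ a.den_pos, m + n / a.den * a.num.toNat, ?_⟩
    rw [natCast_mul_eq a n]
    push_cast [hnum]
    ring
  · rintro ⟨j, -, m, rfl⟩
    exact ⟨m, j, add_comm _ _⟩

end Rat

theorem Set.range_add_natCast_inter_Ioc {K : Type*} [Field K] [LinearOrder K]
    [IsStrictOrderedRing K] [FloorSemiring K] {x c : K} (h : x ≤ c) :
    Set.range (fun m : ℕ => x + m) ∩ Set.Ioc (c - 1) c = {x + ⌊c - x⌋₊} := by
  have hcx : 0 ≤ c - x := sub_nonneg.mpr h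
  ext y
  simp only [Set.mem_inter_iff, Set.mem_range, Set.mem_Ioc, Set.mem_singleton_iff]
  constructor
  · rintro ⟨⟨m, rfl⟩, hlt, hle⟩
    rw [(Nat.floor_eq_iff hcx).mpr ⟨by linarith, by linarith⟩]
  · rintro rfl
    exact ⟨⟨_, rfl⟩, by linarith [Nat.lt_floor_add_one (c - x)], by linarith [Nat.floor_le hcx]⟩

theorem base_case_disjoint_union_general
    (a : ℚ) (ha : 0 < a)
    (S₁ : AddSubmonoid ℚ) (hS₁ : S₁ = AddSubmonoid.closure {1, a}) :
    ((S₁ : Set ℚ) = ⋃ j ∈ Finset.range a.den, Set.range (fun m : ℕ => (j : ℚ) * a + m)) ∧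
    (∀ j j' : ℕ, j < a.den → j' < a.den → j ≠ j' →
      Disjoint (Set.range (fun m : ℕ => (j : ℚ) * a + m))
        (Set.range (fun m : ℕ => (j' : ℚ) * a + m))) ∧
    ((S₁ : Set ℚ) ∩
        Set.Ioc (((a.den : ℚ) - 1) * a - 1) (((a.den : ℚ) - 1) * a)).encard =
      (a.den : ℕ∞) := by
  have hS : (S₁ : Set ℚ) = ⋃ j ∈ Finset.range a.den, Set.range (fun m : ℕ => (j : ℚ) * a + m) :=
    hS₁ ▸ Rat.coe_closure_one_self ha.le
  refine ⟨hS, ?_, ?_⟩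
  · intro j j' hj hj' hne
    rw [Set.disjoint_left]
    rintro _ ⟨m, rfl⟩ ⟨m', hm'⟩
    exact hne (Rat.eq_of_natCast_mul_add_natCast_eq hj' hj hm').symm
  · set c := ((a.den : ℚ) - 1) * a
    have hT : (S₁ : Set ℚ) ∩ Set.Ioc (c - 1) c =
        (fun j : ℕ => (j : ℚ) * a + ⌊c - j * a⌋₊) '' (Finset.range a.den) := by
      rw [hS, Set.iUnion₂_inter, Set.image_eq_iUnion, Finset.set_biUnion_coe]
      refine Set.iUnion₂_congr fun j hj => Set.range_add_natCast_inter_Ioc ?_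
      have hj_le : (j : ℚ) ≤ a.den - 1 := by
        rw [le_sub_iff_add_le]
        exact_mod_cast Finset.mem_range.mp hj
      exact mul_le_mul_of_nonneg_right hj_le ha.le
    rw [hT, Set.InjOn.encard_image, Set.encard_coe_eq_coe_finsetCard, Finset.card_range]
    intro j hj j' hj' h
    exact Rat.eq_of_natCast_mul_add_natCast_eq (Finset.mem_range.mp hj)
      (Finset.mem_range.mp hj') h

/-- If `a` is a positive rational with denominator `b = a.den > 1` and `S₁` is the submonoid of
`ℚ≥0` generated by `1` and `a`, then `S₁` is the disjoint union of the `ℕ`-modules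
`ℕ, a+ℕ, …, (b-1)a+ℕ`, and consequently `|S₁ ∩ ((b-1)a - 1, (b-1)a]| = b`. -/
theorem base_case_disjoint_union
    (a : ℚ) (ha : 0 < a) (hden : 1 < a.den)
    (S₁ : AddSubmonoid ℚ) (hS₁ : S₁ = AddSubmonoid.closure {1, a}) :
    ((S₁ : Set ℚ) = ⋃ j ∈ Finset.range a.den, Set.range (fun m : ℕ => (j : ℚ) * a + m)) ∧
    (∀ j j' : ℕ, j < a.den → j' < a.den → j ≠ j' →
      Disjoint (Set.range (fun m : ℕ => (j : ℚ) * a + m))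
        (Set.range (fun m : ℕ => (j' : ℚ) * a + m))) ∧
    ((S₁ : Set ℚ) ∩
        Set.Ioc (((a.den : ℚ) - 1) * a - 1) (((a.den : ℚ) - 1) * a)).encard =
      (a.den : ℕ∞) :=
  base_case_disjoint_union_general a ha S₁ hS₁
end

section
/- Suppose S ⊆ ℝ₊ is a subsemigroup of positive reals with smallest element s₀, and there exist c > 0 and d ∈ ℕ₊ with |S ∩ (0, n·s₀)| < c·n^d for all n ∈ ℕ. Then the rational rank of the subgroup of ℝ generated by S is at most d; equivalently, any d+1 elements of S are linearly dependent over ℚ. -/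
/-!
If `γ₁, …, γ_t ∈ S` are rationally independent, the sums `∑ aᵢ γᵢ` with `1 ≤ aᵢ ≤ m` are
`m ^ t` distinct elements of `S` below `m ∑ γᵢ`. Taking `n = m k` with `k s₀ > ∑ γᵢ`, this gives
`m ^ (d + 1) ≤ |S ∩ (0, n s₀)| < c k ^ d m ^ d`, which fails for `m > c k ^ d`.
-/

open Set

section AddClosed

variable {M : Type*} {S : Set M}

lemma succ_nsmul_mem_of_add_mem [AddMonoid M] (hadd : ∀ x ∈ S, ∀ y ∈ S, x + y ∈ S)
    {x : M} (hx : x ∈ S) (k : ℕ) : (k + 1) • x ∈ S := by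
  induction k with
  | zero => simpa using hx
  | succ k ih => simpa only [succ_nsmul] using hadd _ ih x hx

lemma sum_mem_of_add_mem [AddCommMonoid M] (hadd : ∀ x ∈ S, ∀ y ∈ S, x + y ∈ S)
    {ι : Type*} {t : Finset ι} (ht : t.Nonempty) {f : ι → M} (hf : ∀ i ∈ t, f i ∈ S) :
    ∑ i ∈ t, f i ∈ S := by
  induction ht using Finset.Nonempty.cons_induction with
  | singleton a => simpa using hf a (by simp)
  | cons a s ha hs ih =>
    rw [Finset.sum_cons]
    exact hadd _ (hf a (by simp)) _ (ih fun i hi ↦ hf i (Finset.mem_cons_of_mem hi))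

end AddClosed

lemma pow_card_le_ncard_of_linearIndependent {ι : Type*} [Fintype ι] [Nonempty ι] {S : Set ℝ}
    (hpos : S ⊆ Ioi 0) (hadd : ∀ x ∈ S, ∀ y ∈ S, x + y ∈ S) {γ : ι → ℝ} (hγ : ∀ i, γ i ∈ S)
    (hli : LinearIndependent ℚ γ) (m : ℕ) {L : ℝ} (hL : m * ∑ i, γ i < L)
    (hfin : (S ∩ Ioo 0 L).Finite) :
    m ^ Fintype.card ι ≤ (S ∩ Ioo 0 L).ncard := by
  let F : (ι → Fin m) → ℝ := fun a ↦ ∑ i, (a i + 1 : ℕ) • γ i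
  have hF_inj : Function.Injective F := fun a b hab ↦ by
    have := Fintype.linearIndependent_iffₛ.mp (hli.restrict_scalars' ℕ) _ _ hab
    exact funext fun i ↦ Fin.ext (by simpa using this i)
  have hF_mem (a : ι → Fin m) : F a ∈ S ∩ Ioo 0 L := by
    have hS : F a ∈ S := sum_mem_of_add_mem hadd Finset.univ_nonempty
      fun i _ ↦ succ_nsmul_mem_of_add_mem hadd (hγ i) _
    have hle : F a ≤ m * ∑ i, γ i := by
      rw [Finset.mul_sum]
      refine Finset.sum_le_sum fun i _ ↦ ?_
      rw [nsmul_eq_mul]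
      gcongr
      · exact (hpos (hγ i)).le
      · exact_mod_cast (a i).is_lt
    exact ⟨hS, hpos hS, hle.trans_lt hL⟩
  calc
    m ^ Fintype.card ι = (univ : Set (ι → Fin m)).ncard := by
      rw [ncard_univ, Nat.card_fun, Nat.card_fin, Nat.card_eq_fintype_card]
    _ ≤ (S ∩ Ioo 0 L).ncard :=
      ncard_le_ncard_of_injOn F (fun a _ ↦ hF_mem a) hF_inj.injOn hfin

theorem polynomially_bounded_semigroup_ratRank_le_general
    (S : Set ℝ) (hpos : S ⊆ Set.Ioi 0)
    (hadd : ∀ x ∈ S, ∀ y ∈ S, x + y ∈ S)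
    (s₀ : ℝ) (hs₀S : s₀ ∈ S)
    (c : ℝ) (hc : 0 < c) (d : ℕ)
    (hbound : ∀ n : ℕ, 1 ≤ n → (S ∩ Set.Ioo 0 (n * s₀)).Finite ∧
      ((S ∩ Set.Ioo 0 (n * s₀)).ncard : ℝ) < c * (n : ℝ) ^ d) :
    ∀ γ : Fin (d + 1) → ℝ, (∀ i, γ i ∈ S) → ¬ LinearIndependent ℚ γ := by
  intro γ hγ hli
  have hs₀ : 0 < s₀ := hpos hs₀S
  obtain ⟨k, hk⟩ := exists_nat_gt ((∑ i, γ i) / s₀)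
  obtain ⟨m, hm⟩ := exists_nat_gt (c * k ^ d)
  have hT : 0 < ∑ i, γ i := Finset.sum_pos (fun i _ ↦ mem_Ioi.mp (hpos (hγ i))) Finset.univ_nonempty
  have hk0 : 0 < k := by exact_mod_cast (div_pos hT hs₀).trans hk
  have hm0 : 0 < m := by exact_mod_cast (by positivity : 0 < c * k ^ d).trans hm
  have hL : m * ∑ i, γ i < ((m * k : ℕ) : ℝ) * s₀ := by
    rw [div_lt_iff₀ hs₀] at hk
    push_cast
    rw [mul_assoc]
    gcongr
  obtain ⟨hfin, hcard⟩ := hbound (m * k) (Nat.mul_pos hm0 hk0)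
  have hcount := pow_card_le_ncard_of_linearIndependent hpos hadd hγ hli m hL hfin
  rw [Fintype.card_fin] at hcount
  have : (m : ℝ) ^ (d + 1) < m ^ (d + 1) := calc
    (m : ℝ) ^ (d + 1) ≤ (S ∩ Ioo 0 ((m * k : ℕ) * s₀)).ncard := by exact_mod_cast hcount
    _ < c * ((m * k : ℕ) : ℝ) ^ d := hcard
    _ = c * k ^ d * m ^ d := by push_cast; ring
    _ < m * m ^ d := by gcongr
    _ = m ^ (d + 1) := by ring
  exact this.false

/-- **Lemma 1, second part.** If `S ⊆ ℝ₊` is a subsemigroup with smallest element `s₀` and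
`|S ∩ (0, n·s₀)| < c·n^d` for all `n ≥ 1` (some `c > 0`, `d ≥ 1`), then the rational rank of
`S` is at most `d`: any `d+1` elements of `S` are linearly dependent over `ℚ`. -/
theorem polynomially_bounded_semigroup_ratRank_le
    (S : Set ℝ) (hpos : S ⊆ Set.Ioi 0)
    (hadd : ∀ x ∈ S, ∀ y ∈ S, x + y ∈ S)
    (s₀ : ℝ) (hs₀S : s₀ ∈ S) (hmin : ∀ x ∈ S, s₀ ≤ x)
    (c : ℝ) (hc : 0 < c) (d : ℕ) (hd : 0 < d)
    (hbound : ∀ n : ℕ, 1 ≤ n → (S ∩ Set.Ioo 0 (n * s₀)).Finite ∧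
      ((S ∩ Set.Ioo 0 (n * s₀)).ncard : ℝ) < c * (n : ℝ) ^ d) :
    ∀ γ : Fin (d + 1) → ℝ, (∀ i, γ i ∈ S) → ¬ LinearIndependent ℚ γ :=
  polynomially_bounded_semigroup_ratRank_le_general S hpos hadd s₀ hs₀S c hc d hbound
end

section
/- Suppose S ⊆ ℝ₊ is a subsemigroup of positive reals with smallest element s₀, and there exists c > 0 such that |S ∩ (0, n·s₀)| < c·n for all n ∈ ℕ. Then S is finitely generated as a semigroup and the group generated by S is isomorphic to ℤ. -/
/-!
For `x ∈ S`, if `x, 2x, …, (q-1)x` are pairwise distinct modulo `s₀`, then the sums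
`i • x + (j + 1) • s₀` with `i < q`, `j < B` are `q * B` distinct elements of `S` below
`(M + B) s₀`, where `M` depends only on `q` and `x`; letting `B → ∞`, the hypothesis forces
`q ≤ c`. So every `x ∈ S` has order at most `c` in `ℝ ⧸ s₀ℤ`, i.e. `⌊c⌋! • x ∈ s₀ℤ`.

Hence `S` lies in the cyclic group `(s₀ / ⌊c⌋!)ℤ`, so the group it generates is infinite cyclic.
For finite generation take the Apéry set `{x ∈ S | x - s₀ ∉ S}`: it generates `S` (subtract `s₀`
until leaving `S`) and injects into the finite `⌊c⌋!`-torsion of `ℝ ⧸ s₀ℤ`.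
-/

open Nat

section AddCircleCounting

variable {S : Set ℝ} {s₀ c x : ℝ}

theorem nsmul_add_mem (hadd : ∀ x ∈ S, ∀ y ∈ S, x + y ∈ S) {y : ℝ} (hx : x ∈ S) (hy : y ∈ S) :
    ∀ m : ℕ, m • x + y ∈ S
  | 0 => by simpa using hy
  | m + 1 => by
    rw [succ_nsmul', add_assoc]
    exact hadd x hx _ (nsmul_add_mem hadd hx hy m)

theorem mul_lt_of_injOn_nsmul_coe (hpos : S ⊆ Set.Ioi 0) (hadd : ∀ x ∈ S, ∀ y ∈ S, x + y ∈ S)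
    (hs₀ : s₀ ∈ S) (hx : x ∈ S) {q : ℕ}
    (hq : Set.InjOn (fun i : ℕ => i • (x : AddCircle s₀)) (Set.Iio q)) {B n : ℕ}
    (hlt : q * x + B * s₀ < n * s₀)
    (hbound : (S ∩ Set.Ioo 0 (n * s₀)).Finite ∧ ((S ∩ Set.Ioo 0 (n * s₀)).ncard : ℝ) < c * n) :
    (q * B : ℝ) < c * n := by
  have hs₀pos : 0 < s₀ := hpos hs₀
  have hxpos : 0 < x := hpos hx
  set f : ℕ × ℕ → ℝ := fun ij => ij.1 • x + (ij.2 + 1) • s₀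
  have hf_coe (ij : ℕ × ℕ) : (f ij : AddCircle s₀) = ij.1 • (x : AddCircle s₀) := by
    simp only [f, AddCircle.coe_add, AddCircle.coe_nsmul, AddCircle.coe_period, nsmul_zero,
      add_zero]
  have hinj : Set.InjOn f (Finset.range q ×ˢ Finset.range B : Finset _) := by
    rintro ⟨i, j⟩ hij ⟨i', j'⟩ hij' heq
    simp only [Finset.coe_product, Finset.coe_range, Set.mem_prod, Set.mem_Iio] at hij hij'
    obtain rfl : i = i' := hq hij.1 hij'.1 <| by
      simpa only [hf_coe] using congrArg ((↑) : ℝ → AddCircle s₀) heq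
    have hj : j + 1 = j' + 1 := (nsmul_left_strictMono hs₀pos).injective (add_left_cancel heq)
    rw [Nat.succ_injective hj]
  have hsub : f '' (Finset.range q ×ˢ Finset.range B : Finset _) ⊆ S ∩ Set.Ioo 0 (n * s₀) := by
    rintro _ ⟨⟨i, j⟩, hij, rfl⟩
    simp only [Finset.coe_product, Finset.coe_range, Set.mem_prod, Set.mem_Iio] at hij
    have hmem : f (i, j) ∈ S := nsmul_add_mem hadd hx (nsmul_add_mem hadd hs₀ hs₀ j) i
    refine ⟨hmem, hpos hmem, ?_⟩
    have hi : (i : ℝ) ≤ q := by exact_mod_cast hij.1.le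
    have hj : (j : ℝ) + 1 ≤ B := by exact_mod_cast hij.2
    simp only [f, nsmul_eq_mul]
    push_cast
    nlinarith
  calc (q * B : ℝ) = (f '' (Finset.range q ×ˢ Finset.range B : Finset _)).ncard := by
        rw [hinj.ncard_image, Set.ncard_coe_finset]; simp
    _ ≤ (S ∩ Set.Ioo 0 (n * s₀)).ncard := by exact_mod_cast Set.ncard_le_ncard hsub hbound.1
    _ < c * n := hbound.2

theorem le_of_injOn_nsmul_coe (hpos : S ⊆ Set.Ioi 0) (hadd : ∀ x ∈ S, ∀ y ∈ S, x + y ∈ S)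
    (hs₀ : s₀ ∈ S) (hx : x ∈ S)
    (hbound : ∀ n : ℕ, 1 ≤ n → (S ∩ Set.Ioo 0 (n * s₀)).Finite ∧
      ((S ∩ Set.Ioo 0 (n * s₀)).ncard : ℝ) < c * n) {q : ℕ}
    (hq : Set.InjOn (fun i : ℕ => i • (x : AddCircle s₀)) (Set.Iio q)) :
    (q : ℝ) ≤ c := by
  have hs₀pos : 0 < s₀ := hpos hs₀
  have hxpos : 0 < x := hpos hx
  obtain ⟨M, hM⟩ := exists_nat_gt (q * x / s₀)
  have hMpos : (0 : ℝ) < M := lt_of_le_of_lt (by positivity) hM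
  rw [div_lt_iff₀ hs₀pos] at hM
  have hcount (B : ℕ) : (q * B : ℝ) < c * (M + B) := by
    have h := mul_lt_of_injOn_nsmul_coe hpos hadd hs₀ hx hq (B := B) (n := M + B)
      (by push_cast; linarith) (hbound _ (by exact_mod_cast (by positivity : (0 : ℝ) < M + B)))
    exact_mod_cast h
  by_contra! hcq
  obtain ⟨B, hB⟩ := exists_nat_gt (c * M / (q - c))
  rw [div_lt_iff₀ (sub_pos.2 hcq)] at hB
  linarith [hcount B]

theorem addOrderOf_coe_pos_and_le (hpos : S ⊆ Set.Ioi 0) (hadd : ∀ x ∈ S, ∀ y ∈ S, x + y ∈ S)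
    (hs₀ : s₀ ∈ S) (hx : x ∈ S)
    (hbound : ∀ n : ℕ, 1 ≤ n → (S ∩ Set.Ioo 0 (n * s₀)).Finite ∧
      ((S ∩ Set.Ioo 0 (n * s₀)).ncard : ℝ) < c * n) :
    0 < addOrderOf (x : AddCircle s₀) ∧ (addOrderOf (x : AddCircle s₀) : ℝ) ≤ c := by
  refine ⟨Nat.pos_of_ne_zero fun h => ?_,
    le_of_injOn_nsmul_coe hpos hadd hs₀ hx hbound nsmul_injOn_Iio_addOrderOf⟩
  have hinj := injective_nsmul_iff_not_isOfFinAddOrder.2 (addOrderOf_eq_zero_iff.1 h)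
  have := le_of_injOn_nsmul_coe hpos hadd hs₀ hx hbound (q := ⌊c⌋₊ + 1) hinj.injOn
  push_cast at this
  linarith [Nat.lt_floor_add_one c]

theorem factorial_floor_nsmul_coe_eq_zero (hpos : S ⊆ Set.Ioi 0)
    (hadd : ∀ x ∈ S, ∀ y ∈ S, x + y ∈ S) (hs₀ : s₀ ∈ S) (hx : x ∈ S)
    (hbound : ∀ n : ℕ, 1 ≤ n → (S ∩ Set.Ioo 0 (n * s₀)).Finite ∧
      ((S ∩ Set.Ioo 0 (n * s₀)).ncard : ℝ) < c * n) :
    (⌊c⌋₊)! • (x : AddCircle s₀) = 0 := by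
  obtain ⟨hq_pos, hq_le⟩ := addOrderOf_coe_pos_and_le hpos hadd hs₀ hx hbound
  exact addOrderOf_dvd_iff_nsmul_eq_zero.1 (Nat.dvd_factorial hq_pos (Nat.le_floor hq_le))

end AddCircleCounting

theorem AddCircle.mem_zmultiples_div_of_nsmul_coe_eq_zero {𝕜 : Type*} [Field 𝕜] [CharZero 𝕜]
    {p x : 𝕜} {N : ℕ} (hN : N ≠ 0) (h : N • (x : AddCircle p) = 0) :
    x ∈ AddSubgroup.zmultiples (p / N) := by
  rw [← AddCircle.coe_nsmul, AddCircle.coe_eq_zero_iff] at h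
  obtain ⟨k, hk⟩ := h
  rw [zsmul_eq_mul, nsmul_eq_mul] at hk
  refine ⟨k, show k • (p / N) = x from ?_⟩
  rw [zsmul_eq_mul, ← mul_div_assoc, hk, mul_div_cancel_left₀ _ (Nat.cast_ne_zero.2 hN)]

section Apery

variable {S : Set ℝ} {s : ℝ}

/-- Since `0 ∉ S` here, this set contains `s` where the usual Apéry set contains `0`. -/
def aperySet (S : Set ℝ) (s : ℝ) : Set ℝ := {x ∈ S | x - s ∉ S}

theorem subset_closure_aperySet (hpos : S ⊆ Set.Ioi 0) (hs : s ∈ S) :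
    S ⊆ AddSubsemigroup.closure (aperySet S s) := by
  have hs_mem : s ∈ aperySet S s := ⟨hs, fun h => by simpa using hpos h⟩
  suffices h : ∀ n : ℕ, ∀ x ∈ S, x < n * s → x ∈ AddSubsemigroup.closure (aperySet S s) by
    intro x hx
    obtain ⟨n, hn⟩ := exists_nat_gt (x / s)
    exact h n x hx (by rwa [div_lt_iff₀ (hpos hs)] at hn)
  intro n
  induction n with
  | zero =>
    intro x hx hlt
    rw [Nat.cast_zero, zero_mul] at hlt
    exact (lt_asymm (hpos hx) hlt).elim
  | succ n ih =>
    intro x hx hlt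
    by_cases hxs : x - s ∈ S
    · have h := add_mem (ih _ hxs (by push_cast at hlt; linarith))
        (AddSubsemigroup.subset_closure hs_mem)
      rwa [sub_add_cancel] at h
    · exact AddSubsemigroup.subset_closure ⟨hx, hxs⟩

theorem closure_aperySet (hpos : S ⊆ Set.Ioi 0) (hadd : ∀ x ∈ S, ∀ y ∈ S, x + y ∈ S)
    (hs : s ∈ S) : (AddSubsemigroup.closure (aperySet S s) : Set ℝ) = S :=
  subset_antisymm
    ((AddSubsemigroup.closure_le (S := ⟨S, fun ha hb => hadd _ ha _ hb⟩)).2 fun _ hx => hx.1)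
    (subset_closure_aperySet hpos hs)

/-- Distinct elements of the Apéry set are distinct modulo `s`. -/
theorem aperySet_finite (hpos : S ⊆ Set.Ioi 0) (hadd : ∀ x ∈ S, ∀ y ∈ S, x + y ∈ S)
    (hs : s ∈ S) {N : ℕ} (hN : 0 < N) (htors : ∀ x ∈ S, N • (x : AddCircle s) = 0) :
    (aperySet S s).Finite := by
  have hne : ∀ x ∈ S, ∀ y ∈ aperySet S s, x < y → (x : AddCircle s) ≠ y := by
    intro x hx y hy hxy heq
    obtain ⟨m, hm⟩ := (AddCircle.coe_eq_zero_of_pos_iff s (hpos hs) (sub_pos.2 hxy)).1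
      (by rw [AddCircle.coe_sub, heq, sub_self])
    cases m with
    | zero => rw [zero_nsmul] at hm; linarith
    | succ m =>
      refine hy.2 ?_
      rw [show y - s = m • s + x by rw [succ_nsmul] at hm; linarith]
      exact nsmul_add_mem hadd hs hx m
  refine Set.Finite.of_finite_image (f := ((↑) : ℝ → AddCircle s))
    ((AddCircle.finite_torsion s hN).subset ?_) ?_
  · rintro _ ⟨x, hx, rfl⟩
    exact htors x hx.1
  · intro x hx y hy heq
    by_contra hxy
    rcases lt_or_gt_of_ne hxy with h | h
    · exact hne x hx.1 y hy h heq
    · exact hne y hy.1 x hx h heq.symm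

end Apery

theorem AddSubgroup.nonempty_addEquiv_int_of_le_zmultiples {A : Type*} [AddGroup A]
    [IsAddTorsionFree A] {G : AddSubgroup A} {d x : A} (hG : G ≤ AddSubgroup.zmultiples d)
    (hx : x ∈ G) (hx0 : x ≠ 0) : Nonempty (G ≃+ ℤ) := by
  have := AddSubgroup.isAddCyclic_of_le hG
  have : Infinite G := Set.infinite_coe_iff.2 <|
    (infinite_zmultiples.2 (not_isOfFinAddOrder_of_isAddTorsionFree hx0)).mono
      (AddSubgroup.zmultiples_le_of_mem hx)
  exact ⟨intCyclicAddEquiv.symm⟩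

theorem linearly_bounded_semigroup_finitelyGenerated_general
    (S : Set ℝ) (hpos : S ⊆ Set.Ioi 0)
    (hadd : ∀ x ∈ S, ∀ y ∈ S, x + y ∈ S)
    (s₀ : ℝ) (hs₀S : s₀ ∈ S)
    (c : ℝ)
    (hbound : ∀ n : ℕ, 1 ≤ n → (S ∩ Set.Ioo 0 (n * s₀)).Finite ∧
      ((S ∩ Set.Ioo 0 (n * s₀)).ncard : ℝ) < c * n) :
    (∃ F : Finset ℝ, (F : Set ℝ) ⊆ S ∧
      (AddSubsemigroup.closure (F : Set ℝ) : Set ℝ) = S) ∧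
    Nonempty (AddSubgroup.closure S ≃+ ℤ) := by
  have htors (x : ℝ) (hx : x ∈ S) : (⌊c⌋₊)! • (x : AddCircle s₀) = 0 :=
    factorial_floor_nsmul_coe_eq_zero hpos hadd hs₀S hx hbound
  have hfin := aperySet_finite hpos hadd hs₀S (factorial_pos _) htors
  refine ⟨⟨hfin.toFinset, by
    rw [Set.Finite.coe_toFinset]; exact fun _ hx => hx.1, by
    simpa using closure_aperySet hpos hadd hs₀S⟩, ?_⟩
  refine AddSubgroup.nonempty_addEquiv_int_of_le_zmultiples (d := s₀ / (⌊c⌋₊)!)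
    ((AddSubgroup.closure_le _).2 fun x hx => ?_) (AddSubgroup.subset_closure hs₀S)
    (hpos hs₀S).ne'
  exact AddCircle.mem_zmultiples_div_of_nsmul_coe_eq_zero (factorial_ne_zero _) (htors x hx)

/-- **Lemma 2.** If `S ⊆ ℝ₊` is a subsemigroup with smallest element `s₀` and there is `c > 0`
with `|S ∩ (0, n·s₀)| < c·n` for all `n ≥ 1`, then `S` is finitely generated as a semigroup
and the group generated by `S` is isomorphic to `ℤ`. -/
theorem linearly_bounded_semigroup_finitelyGenerated
    (S : Set ℝ) (hpos : S ⊆ Set.Ioi 0)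
    (hadd : ∀ x ∈ S, ∀ y ∈ S, x + y ∈ S)
    (s₀ : ℝ) (hs₀S : s₀ ∈ S) (hmin : ∀ x ∈ S, s₀ ≤ x)
    (c : ℝ) (hc : 0 < c)
    (hbound : ∀ n : ℕ, 1 ≤ n → (S ∩ Set.Ioo 0 (n * s₀)).Finite ∧
      ((S ∩ Set.Ioo 0 (n * s₀)).ncard : ℝ) < c * n) :
    (∃ F : Finset ℝ, (F : Set ℝ) ⊆ S ∧
      (AddSubsemigroup.closure (F : Set ℝ) : Set ℝ) = S) ∧
    Nonempty (AddSubgroup.closure S ≃+ ℤ) :=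
  linearly_bounded_semigroup_finitelyGenerated_general S hpos hadd s₀ hs₀S c hbound
end

section
/- Suppose S ⊆ ℚ₊ is a subsemigroup with smallest element 1 that is not finitely generated. Then for every e ∈ ℕ and every c > 0 there exists n ∈ ℕ with |S ∩ (0, n)| ≥ e·n − e·n₀ for some fixed n₀ depending on e; in particular, there is no c > 0 with |S ∩ (0, n)| < c·n for all n ∈ ℕ. -/
/-!
Multiplying by a common multiple `B` of the denominators turns a subsemigroup of `ℚ₊` with
denominators dividing `B` into a subsemigroup of `ℕ`, and a subsemigroup of `ℕ` is generated by
any positive element `b` together with its least element in each residue class modulo `b`.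
Hence a subsemigroup `S` that is not finitely generated has elements of arbitrarily large
denominator, so for every `e` it contains `a₁, …, a_e` with pairwise distinct denominators.
As `1 ∈ S`, every `aᵢ + k` lies in `S`, and these are pairwise distinct because
`(a + k).den = a.den`: beyond `max aᵢ`, every unit interval contains `e` elements of `S`.
-/

theorem AddSubsemigroup.add_nsmul_mem {M : Type*} [AddMonoid M] (T : AddSubsemigroup M)
    {x y : M} (hx : x ∈ T) (hy : y ∈ T) (k : ℕ) : x + k • y ∈ T := by
  induction k with
  | zero => simpa using hx
  | succ k ih => simpa only [succ_nsmul, ← add_assoc] using T.add_mem ih hy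

theorem AddSubsemigroup.exists_finite_closure_eq_of_pos_mem (T : AddSubsemigroup ℕ)
    {b : ℕ} (hb : 0 < b) (hbT : b ∈ T) :
    ∃ F : Set ℕ, F.Finite ∧ AddSubsemigroup.closure F = T := by
  let least (r : ℕ) : ℕ := sInf {m | m ∈ T ∧ m % b = r}
  have least_spec {n : ℕ} (hn : n ∈ T) :
      least (n % b) ∈ T ∧ least (n % b) % b = n % b ∧ least (n % b) ≤ n := by
    have hne : {m | m ∈ T ∧ m % b = n % b}.Nonempty := ⟨n, hn, rfl⟩
    exact ⟨(Nat.sInf_mem hne).1, (Nat.sInf_mem hne).2, Nat.sInf_le ⟨hn, rfl⟩⟩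
  refine ⟨insert b ((fun n ↦ least (n % b)) '' T), ?_, le_antisymm ?_ ?_⟩
  · refine (((Set.finite_Iio b).image least).subset ?_).insert b
    rintro _ ⟨n, -, rfl⟩
    exact ⟨n % b, Nat.mod_lt n hb, rfl⟩
  · rw [closure_le, Set.insert_subset_iff]
    exact ⟨hbT, by rintro _ ⟨n, hn, rfl⟩; exact (least_spec hn).1⟩
  · intro n hn
    obtain ⟨-, hmod, hle⟩ := least_spec hn
    obtain ⟨k, hk⟩ := (Nat.modEq_iff_dvd' hle).1 hmod
    have hn_eq : n = least (n % b) + k • b := by rw [smul_eq_mul, mul_comm]; omega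
    rw [hn_eq]
    refine add_nsmul_mem _ (subset_closure ?_) (subset_closure (Set.mem_insert b _)) k
    exact Set.mem_insert_of_mem b ⟨n, hn, rfl⟩

theorem Rat.exists_natCast_eq_mul_of_den_dvd {x : ℚ} (hx : 0 ≤ x) {B : ℕ} (hB : x.den ∣ B) :
    ∃ n : ℕ, (n : ℚ) = x * B := by
  obtain ⟨c, rfl⟩ := hB
  refine ⟨x.num.toNat * c, ?_⟩
  have hnum : ((x.num.toNat : ℤ) : ℚ) = x.num := by
    rw [Int.toNat_of_nonneg (Rat.num_nonneg.2 hx)]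
  push_cast
  rw [← Int.cast_natCast, hnum, ← Rat.mul_den_eq_num, mul_assoc]

theorem AddSubsemigroup.exists_finite_closure_eq_of_den_dvd (T : AddSubsemigroup ℚ)
    (hpos : ∀ x ∈ T, 0 < x) {B : ℕ} (hB : B ≠ 0) (hden : ∀ x ∈ T, x.den ∣ B) :
    ∃ F : Set ℚ, F.Finite ∧ AddSubsemigroup.closure F = T := by
  let scale : ℕ →ₙ+ ℚ :=
    { toFun := fun n ↦ n / B
      map_add' := fun m n ↦ by push_cast; ring }
  have hrange : T ≤ scale.srange := fun x hx ↦ by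
    obtain ⟨n, hn⟩ := Rat.exists_natCast_eq_mul_of_den_dvd (hpos x hx).le (hden x hx)
    exact AddHom.mem_srange.2 ⟨n, by simp [scale, hn, hB]⟩
  obtain hempty | ⟨x, hx⟩ := (T : Set ℚ).eq_empty_or_nonempty
  · refine ⟨∅, Set.finite_empty, ?_⟩
    rw [closure_empty]
    exact SetLike.coe_injective (by simp [hempty])
  obtain ⟨b, hb⟩ := AddHom.mem_srange.1 (hrange hx)
  have hbT : b ∈ T.comap scale := by simpa [hb] using hx
  have hb0 : 0 < b := Nat.pos_of_ne_zero fun h ↦ by simpa [scale, ← hb, h] using hpos x hx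
  obtain ⟨F, hF, hFT⟩ := (T.comap scale).exists_finite_closure_eq_of_pos_mem hb0 hbT
  refine ⟨scale '' F, hF.image scale, ?_⟩
  rw [← AddHom.map_mclosure, hFT, AddSubsemigroup.map_comap_eq_self hrange]

theorem Rat.exists_finset_injOn_den {S : Set ℚ} (hS : ∀ B : ℕ, B ≠ 0 → ∃ x ∈ S, ¬ x.den ∣ B)
    (e : ℕ) : ∃ A : Finset ℚ, ↑A ⊆ S ∧ A.card = e ∧ Set.InjOn Rat.den A := by
  induction e with
  | zero => exact ⟨∅, by simp, rfl, by simp⟩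
  | succ e ih =>
    obtain ⟨A, hAS, hcard, hinj⟩ := ih
    obtain ⟨x, hxS, hx⟩ := hS (∏ a ∈ A, a.den) (Finset.prod_ne_zero_iff.2 fun a _ ↦ a.den_nz)
    have hden : ∀ a ∈ A, a.den ≠ x.den := fun a ha h ↦ hx (h ▸ Finset.dvd_prod_of_mem _ ha)
    have hxA : x ∉ A := fun h ↦ hden x h rfl
    refine ⟨insert x A, ?_, by rw [Finset.card_insert_of_notMem hxA, hcard], ?_⟩
    · rw [Finset.coe_insert]; exact Set.insert_subset hxS hAS
    · rw [Finset.coe_insert, Set.injOn_insert hxA]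
      exact ⟨hinj, fun ⟨a, ha, h⟩ ↦ hden a ha h⟩

theorem AddSubsemigroup.card_mul_le_encard_inter_Ioo (T : AddSubsemigroup ℚ) (h1 : 1 ∈ T)
    {A : Finset ℚ} (hAT : (A : Set ℚ) ⊆ T) (hinj : Set.InjOn Rat.den A) {n₀ : ℕ}
    (hA : ↑A ⊆ Set.Ioc 0 (n₀ : ℚ)) (n : ℕ) :
    ((A.card * (n - n₀) : ℕ) : ℕ∞) ≤ ((T : Set ℚ) ∩ Set.Ioo 0 (n : ℚ)).encard := by
  let shift : ℚ × ℕ → ℚ := fun p ↦ p.1 + p.2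
  have hshift : Set.InjOn shift ↑(A ×ˢ Finset.range (n - n₀)) := by
    rintro ⟨a, k⟩ hak ⟨b, l⟩ hbl h
    simp only [Finset.coe_product, Set.mem_prod, Finset.mem_coe] at hak hbl
    have hab : a = b := hinj hak.1 hbl.1 (by simpa [shift] using congrArg Rat.den h)
    subst hab
    simpa [shift] using h
  rw [← Finset.card_range (n - n₀), ← Finset.card_product,
    ← Finset.card_image_of_injOn hshift, ← Set.encard_coe_eq_coe_finsetCard]
  refine Set.encard_le_encard ?_
  intro y hy
  simp only [Finset.coe_image, Set.mem_image, Finset.mem_coe, Finset.mem_product,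
    Finset.mem_range] at hy
  obtain ⟨⟨a, k⟩, ⟨ha, hk⟩, rfl⟩ := hy
  obtain ⟨ha0, han₀⟩ := hA ha
  have hk' : (k : ℚ) + n₀ < n := by exact_mod_cast (by omega : k + n₀ < n)
  refine ⟨by simpa using T.add_nsmul_mem (hAT ha) h1 k, ?_, ?_⟩ <;>
    simp only [shift] <;> linarith [(k.cast_nonneg : (0 : ℚ) ≤ k)]

theorem Set.exists_mul_le_ncard_of_superlinear {α : Type*} {s : ℕ → Set α}
    (hs : ∀ e : ℕ, ∃ n₀ : ℕ, ∀ n : ℕ, n₀ ≤ n → ((e * (n - n₀) : ℕ) : ℕ∞) ≤ (s n).encard)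
    (c : ℝ) : ∃ n : ℕ, 1 ≤ n ∧ ((s n).Finite → c * n ≤ (s n).ncard) := by
  obtain ⟨n₀, hn₀⟩ := hs (⌈c⌉₊ + 1)
  set m := ⌈c⌉₊ * n₀ + 1
  refine ⟨n₀ + m, by omega, fun hfin ↦ ?_⟩
  have hle := hn₀ (n₀ + m) (by omega)
  rw [← hfin.cast_ncard_eq, Nat.cast_le, Nat.add_sub_cancel_left] at hle
  have hle' : (((⌈c⌉₊ + 1) * m : ℕ) : ℝ) ≤ (s (n₀ + m)).ncard := by exact_mod_cast hle
  have hc : c ≤ ⌈c⌉₊ := Nat.le_ceil c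
  have hm : c * n₀ + 1 ≤ m := by
    push_cast [m]
    gcongr
  push_cast at hle' ⊢
  nlinarith [mul_le_mul_of_nonneg_right hc (by positivity : (0 : ℝ) ≤ m)]

theorem not_finitely_generated_growth_general
    (S : Set ℚ) (hSpos : S ⊆ Set.Ioi 0)
    (hadd : ∀ x ∈ S, ∀ y ∈ S, x + y ∈ S)
    (h1S : (1 : ℚ) ∈ S)
    (hnfg : ¬ ∃ F : Finset ℚ, (F : Set ℚ) ⊆ S ∧
      (AddSubsemigroup.closure (F : Set ℚ) : Set ℚ) = S) :
    (∀ e : ℕ, ∃ n₀ : ℕ, ∀ n : ℕ, n₀ ≤ n →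
      ((e * (n - n₀) : ℕ) : ℕ∞) ≤ (S ∩ Set.Ioo 0 (n : ℚ)).encard) ∧
    ¬ ∃ c : ℝ, 0 < c ∧ ∀ n : ℕ, 1 ≤ n →
      (S ∩ Set.Ioo 0 (n : ℚ)).Finite ∧
      ((S ∩ Set.Ioo 0 (n : ℚ)).ncard : ℝ) < c * n := by
  let T : AddSubsemigroup ℚ := { carrier := S, add_mem' := fun hx hy ↦ hadd _ hx _ hy }
  have hden : ∀ B : ℕ, B ≠ 0 → ∃ x ∈ S, ¬ x.den ∣ B := by
    intro B hB
    by_contra! h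
    obtain ⟨F, hF, hFT⟩ := T.exists_finite_closure_eq_of_den_dvd (fun x hx ↦ hSpos hx) hB h
    have hFS : F ⊆ S := fun y hy ↦ (hFT ▸ AddSubsemigroup.subset_closure hy : y ∈ T)
    exact hnfg ⟨hF.toFinset, by simpa using hFS, by rw [hF.coe_toFinset, hFT]; rfl⟩
  have growth : ∀ e : ℕ, ∃ n₀ : ℕ, ∀ n : ℕ, n₀ ≤ n →
      ((e * (n - n₀) : ℕ) : ℕ∞) ≤ (S ∩ Set.Ioo 0 (n : ℚ)).encard := by
    intro e
    obtain ⟨A, hAS, rfl, hinj⟩ := Rat.exists_finset_injOn_den hden e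
    obtain ⟨M, hM⟩ := A.bddAbove
    obtain ⟨n₀, hMn₀⟩ := exists_nat_ge M
    have hA : (A : Set ℚ) ⊆ Set.Ioc 0 (n₀ : ℚ) := fun a ha ↦
      ⟨hSpos (hAS ha), (hM ha).trans hMn₀⟩
    exact ⟨n₀, fun n _ ↦ T.card_mul_le_encard_inter_Ioo h1S hAS hinj hA n⟩
  refine ⟨growth, fun ⟨c, _, hc⟩ ↦ ?_⟩
  obtain ⟨n, hn, hle⟩ := Set.exists_mul_le_ncard_of_superlinear growth c
  obtain ⟨hfin, hlt⟩ := hc n hn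
  linarith [hle hfin]

/-- If `S ⊆ ℚ₊` is a subsemigroup with smallest element `1` that is not finitely generated,
then for every `e ∈ ℕ` there is `n₀` with `|S ∩ (0,n)| ≥ e·(n - n₀)` for all `n ≥ n₀`;
in particular there is no `c > 0` with `|S ∩ (0,n)| < c·n` for all `n ≥ 1`. -/
theorem not_finitely_generated_growth
    (S : Set ℚ) (hSpos : S ⊆ Set.Ioi 0)
    (hadd : ∀ x ∈ S, ∀ y ∈ S, x + y ∈ S)
    (h1S : (1 : ℚ) ∈ S) (hmin : ∀ x ∈ S, 1 ≤ x)
    (hnfg : ¬ ∃ F : Finset ℚ, (F : Set ℚ) ⊆ S ∧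
      (AddSubsemigroup.closure (F : Set ℚ) : Set ℚ) = S) :
    (∀ e : ℕ, ∃ n₀ : ℕ, ∀ n : ℕ, n₀ ≤ n →
      ((e * (n - n₀) : ℕ) : ℕ∞) ≤ (S ∩ Set.Ioo 0 (n : ℚ)).encard) ∧
    ¬ ∃ c : ℝ, 0 < c ∧ ∀ n : ℕ, 1 ≤ n →
      (S ∩ Set.Ioo 0 (n : ℚ)).Finite ∧
      ((S ∩ Set.Ioo 0 (n : ℚ)).ncard : ℝ) < c * n :=
  not_finitely_generated_growth_general S hSpos hadd h1S hnfg
end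

section
/- Let S ⊆ ℚ₊ be the subsemigroup generated by 1 and a_i = 4^i + 2^{−i} for i ≥ 1. Then there exist constants such that (1/6)·n·√n < |S ∩ (0,n)| < (4/3)·n·√n for all sufficiently large n ∈ ℕ. -/
/-!
Every element of `S` below `4 ^ (m + 1)` is a sum of `1, a 0, …, a (m - 1)`, so it lies in
`2⁻ᵐ ℕ`; hence `S ∩ (0, n)` has at most `n 2ᵐ ≤ n √n` elements when `4ᵐ ≤ n < 4ᵐ⁺¹`.
Conversely, the sums `c + ∑ i ∈ T, a (k - 1 - i)` with `T ⊆ {0, …, k - 1}` are pairwise distinct,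
since their integer and fractional parts determine `c` and `T`, and `∑ i < k, a i < (4ᵏ⁺¹ - 1) / 3`.
Letting `c` run up to `n - (4ᵏ⁺¹ - 1) / 3` gives about `(n - 4ᵏ⁺¹ / 3) 2ᵏ > n √n / 6` elements.
-/

open Finset

lemma Nat.eq_and_eq_of_mul_add_eq_mul_add {b N F N' F' : ℕ} (h : N * b + F = N' * b + F')
    (hF : F < b) (hF' : F' < b) : N = N' ∧ F = F' := by
  have hb : 0 < b := by omega
  obtain ⟨h1, h2⟩ := (Nat.div_mod_unique (a := N * b + F) (d := N) (c := F) hb).2 ⟨by ring, hF⟩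
  obtain ⟨h3, h4⟩ := (Nat.div_mod_unique (a := N' * b + F') (d := N') (c := F') hb).2 ⟨by ring, hF'⟩
  rw [h] at h1 h2
  exact ⟨h1.symm.trans h3, h2.symm.trans h4⟩

namespace SqrtGrowth

/-- `a i` is the generator `a_{i+1}` of the paper. -/
def a (i : ℕ) : ℚ := 4 ^ (i + 1) + (1 / 2) ^ (i + 1)

def S : AddSubsemigroup ℚ := AddSubsemigroup.closure ({1} ∪ Set.range a)

lemma one_mem_S : (1 : ℚ) ∈ S := AddSubsemigroup.subset_closure (Or.inl rfl)

lemma a_mem_S (i : ℕ) : a i ∈ S := AddSubsemigroup.subset_closure (Or.inr ⟨i, rfl⟩)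

lemma natCast_mem_S {c : ℕ} (hc : 1 ≤ c) : (c : ℚ) ∈ S := by
  induction c, hc using Nat.le_induction with
  | base => simpa using one_mem_S
  | succ c _ ih => simpa using add_mem ih one_mem_S

lemma pos_of_mem_S {x : ℚ} (hx : x ∈ S) : 0 < x := by
  induction hx using AddSubsemigroup.closure_induction with
  | mem x hx =>
    rcases hx with rfl | ⟨i, rfl⟩
    · exact one_pos
    · unfold a; positivity
  | add y z _ _ hy hz => exact add_pos hy hz

lemma a_eq_natCast_div_two_pow {i m : ℕ} (hi : i + 1 ≤ m) :
    ∃ l : ℕ, a i = l / 2 ^ m := by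
  obtain ⟨d, rfl⟩ := Nat.exists_eq_add_of_le hi
  refine ⟨(4 ^ (i + 1) * 2 ^ (i + 1) + 1) * 2 ^ d, ?_⟩
  simp only [a, one_div, inv_pow]
  push_cast
  field_simp
  ring

/-- Below `4 ^ (m + 1)` only `1, a 0, …, a (m - 1)` can occur as summands. -/
lemma exists_eq_natCast_div_two_pow {m : ℕ} {x : ℚ} (hx : x ∈ S) (hlt : x < 4 ^ (m + 1)) :
    ∃ l : ℕ, x = l / 2 ^ m := by
  induction hx using AddSubsemigroup.closure_induction with
  | mem x hx =>
    rcases hx with rfl | ⟨i, rfl⟩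
    · exact ⟨2 ^ m, by simp⟩
    · refine a_eq_natCast_div_two_pow ?_
      by_contra! h
      have : (4 : ℚ) ^ (m + 1) ≤ 4 ^ (i + 1) := pow_le_pow_right₀ (by norm_num) h
      have : (0 : ℚ) < (1 / 2) ^ (i + 1) := by positivity
      rw [a] at hlt
      linarith
  | add y z hy hz ihy ihz =>
    obtain ⟨l, rfl⟩ := ihy (by linarith [pos_of_mem_S hz])
    obtain ⟨l', rfl⟩ := ihz (by linarith [pos_of_mem_S hy])
    exact ⟨l + l', by push_cast; ring⟩

lemma S_inter_Ioo_subset {n m : ℕ} (hn : n ≤ 4 ^ (m + 1)) :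
    (S : Set ℚ) ∩ Set.Ioo 0 n ⊆ ((range (n * 2 ^ m)).image fun l : ℕ ↦ (l : ℚ) / 2 ^ m) := by
  rintro x ⟨hxS, -, hxn⟩
  obtain ⟨l, rfl⟩ := exists_eq_natCast_div_two_pow hxS (hxn.trans_le (by exact_mod_cast hn))
  refine Finset.mem_coe.2 (mem_image_of_mem _ (mem_range.2 ?_))
  rw [div_lt_iff₀ (by positivity)] at hxn
  exact_mod_cast hxn

lemma finite_S_inter_Ioo (n : ℕ) : ((S : Set ℚ) ∩ Set.Ioo 0 n).Finite :=
  (Finset.finite_toSet _).subset (S_inter_Ioo_subset (m := n) (by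
    have := Nat.lt_pow_self (n := n) (by norm_num : 1 < 4); rw [pow_succ]; omega))

lemma ncard_S_inter_Ioo_le {n m : ℕ} (hn : n ≤ 4 ^ (m + 1)) :
    ((S : Set ℚ) ∩ Set.Ioo 0 n).ncard ≤ n * 2 ^ m :=
  calc ((S : Set ℚ) ∩ Set.Ioo 0 n).ncard
      ≤ ((range (n * 2 ^ m)).image fun l : ℕ ↦ (l : ℚ) / 2 ^ m).card := by
        rw [← Set.ncard_coe_finset]
        exact Set.ncard_le_ncard (S_inter_Ioo_subset hn)
    _ ≤ n * 2 ^ m := card_image_le.trans (card_range _).le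

lemma sum_range_a (k : ℕ) :
    ∑ j ∈ range k, a j = (4 ^ (k + 1) - 4) / 3 + 1 - (1 / 2) ^ k := by
  induction k with
  | zero => norm_num
  | succ k ih => rw [sum_range_succ, ih, a]; ring

/-- Indexing the generators by `k - 1 - i` makes the fractional part of `sumOfGens k c T` the binary
number `∑ i ∈ T, 2 ^ i` divided by `2 ^ k`. -/
def sumOfGens (k c : ℕ) (T : Finset ℕ) : ℚ := c + ∑ i ∈ T, a (k - 1 - i)

lemma sumOfGens_mem_S (k : ℕ) {c : ℕ} (hc : 1 ≤ c) (T : Finset ℕ) : sumOfGens k c T ∈ S := by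
  induction T using Finset.induction with
  | empty => simpa [sumOfGens] using natCast_mem_S hc
  | insert i T hi ih =>
    rw [sumOfGens, sum_insert hi, add_left_comm]
    exact add_mem (a_mem_S _) ih

lemma sumOfGens_lt (c : ℕ) {k : ℕ} {T : Finset ℕ} (hT : T ⊆ range k) :
    sumOfGens k c T < c + (4 ^ (k + 1) - 1) / 3 := by
  have hsum : ∑ i ∈ T, a (k - 1 - i) ≤ ∑ j ∈ range k, a j := by
    rw [← sum_range_reflect]
    exact sum_le_sum_of_subset_of_nonneg hT fun i _ _ ↦ (pos_of_mem_S (a_mem_S _)).le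
  have : (0 : ℚ) < (1 / 2) ^ k := by positivity
  rw [sumOfGens]
  linarith [sum_range_a k]

lemma a_reflect_mul_two_pow {k i : ℕ} (hi : i < k) :
    a (k - 1 - i) * 2 ^ k = ((4 ^ (k - i) * 2 ^ k + 2 ^ i : ℕ) : ℚ) := by
  obtain ⟨d, rfl⟩ := Nat.exists_eq_add_of_lt hi
  rw [show i + d + 1 - 1 - i = d by omega, show i + d + 1 - i = d + 1 by omega]
  simp only [a, one_div, inv_pow]
  push_cast
  field_simp
  ring

lemma sumOfGens_mul_two_pow (c : ℕ) {k : ℕ} {T : Finset ℕ} (hT : T ⊆ range k) :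
    sumOfGens k c T * 2 ^ k =
      (((c + ∑ i ∈ T, 4 ^ (k - i)) * 2 ^ k + ∑ i ∈ T, 2 ^ i : ℕ) : ℚ) := by
  rw [sumOfGens, add_mul, sum_mul,
    sum_congr rfl fun i hi ↦ a_reflect_mul_two_pow (mem_range.1 (hT hi))]
  push_cast
  rw [sum_add_distrib, add_mul, sum_mul]
  ring

lemma sumOfGens_injOn (k : ℕ) :
    Set.InjOn (fun p : ℕ × Finset ℕ ↦ sumOfGens k p.1 p.2) {p | p.2 ⊆ range k} := by
  rintro ⟨c, T⟩ (hT : T ⊆ range k) ⟨c', T'⟩ (hT' : T' ⊆ range k) h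
  have hlt : ∀ U : Finset ℕ, U ⊆ range k → ∑ i ∈ U, 2 ^ i < 2 ^ k := fun U hU ↦
    Nat.geomSum_lt le_rfl fun i hi ↦ mem_range.1 (hU hi)
  have hq := congrArg (· * (2 : ℚ) ^ k) h
  simp only [sumOfGens_mul_two_pow c hT, sumOfGens_mul_two_pow c' hT', Nat.cast_inj] at hq
  obtain ⟨hint, hfrac⟩ := Nat.eq_and_eq_of_mul_add_eq_mul_add hq (hlt T hT) (hlt T' hT')
  obtain rfl : T = T' := geomSum_injective le_rfl hfrac
  simpa using hint

lemma mul_two_pow_le_ncard_S_inter_Ioo {C k n : ℕ} (hC : 3 * C + 4 ^ (k + 1) ≤ 3 * n + 1) :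
    C * 2 ^ k ≤ ((S : Set ℚ) ∩ Set.Ioo 0 n).ncard := by
  set D := Icc 1 C ×ˢ (range k).powerset
  have hinj : Set.InjOn (fun p : ℕ × Finset ℕ ↦ sumOfGens k p.1 p.2) D :=
    (sumOfGens_injOn k).mono fun p hp ↦ mem_powerset.1 (mem_product.1 hp).2
  have hsub : ((D.image fun p ↦ sumOfGens k p.1 p.2 : Finset ℚ) : Set ℚ) ⊆
      (S : Set ℚ) ∩ Set.Ioo 0 n := by
    simp only [coe_image, Set.image_subset_iff]
    rintro ⟨c, T⟩ hp
    obtain ⟨hc, hT⟩ := mem_product.1 hp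
    obtain ⟨hc1, hcC⟩ := mem_Icc.1 hc
    have hCQ : (3 * C + 4 ^ (k + 1) : ℚ) ≤ 3 * n + 1 := by exact_mod_cast hC
    have hcQ : (c : ℚ) ≤ C := by exact_mod_cast hcC
    have hlt := sumOfGens_lt c (mem_powerset.1 hT)
    exact ⟨sumOfGens_mem_S k hc1 T, pos_of_mem_S (sumOfGens_mem_S k hc1 T), by linarith⟩
  calc C * 2 ^ k = (D.image fun p ↦ sumOfGens k p.1 p.2).card := by
        rw [card_image_of_injOn hinj, card_product, card_powerset, card_range, Nat.card_Icc,
          Nat.add_sub_cancel]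
    _ ≤ ((S : Set ℚ) ∩ Set.Ioo 0 n).ncard := by
        rw [← Set.ncard_coe_finset]
        exact Set.ncard_le_ncard hsub (finite_S_inter_Ioo n)

lemma le_ncard_S_inter_Ioo {k n : ℕ} (hn : 4 ^ (k + 1) ≤ n) :
    ((n : ℝ) - (4 ^ (k + 1) + 2) / 3) * 2 ^ k ≤ ((S : Set ℚ) ∩ Set.Ioo 0 n).ncard := by
  set C := n - (4 ^ (k + 1) + 2) / 3
  have hcount : C * 2 ^ k ≤ ((S : Set ℚ) ∩ Set.Ioo 0 n).ncard :=
    mul_two_pow_le_ncard_S_inter_Ioo (by omega)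
  have hC : ((3 * n : ℕ) : ℝ) ≤ ((3 * C + 4 ^ (k + 1) + 2 : ℕ) : ℝ) := by
    exact_mod_cast (by omega : 3 * n ≤ 3 * C + 4 ^ (k + 1) + 2)
  push_cast at hC
  calc ((n : ℝ) - (4 ^ (k + 1) + 2) / 3) * 2 ^ k ≤ C * 2 ^ k := by gcongr; linarith
    _ ≤ _ := by exact_mod_cast hcount

lemma exists_four_pow_le_lt {n : ℕ} (hn : 16 ≤ n) :
    ∃ k, 1 ≤ k ∧ 4 ^ (k + 1) ≤ n ∧ n < 4 ^ (k + 2) := by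
  have hlog : 2 ≤ Nat.log 4 n := by
    by_contra! h
    have := Nat.lt_pow_succ_log_self (by norm_num : 1 < 4) n
    have := Nat.pow_le_pow_right (by norm_num : 0 < 4) (show (Nat.log 4 n).succ ≤ 2 by omega)
    omega
  refine ⟨Nat.log 4 n - 1, by omega, ?_, ?_⟩
  · rw [Nat.sub_add_cancel (by omega)]
    exact Nat.pow_log_le_self 4 (by omega)
  · rw [show Nat.log 4 n - 1 + 2 = (Nat.log 4 n).succ by omega]
    exact Nat.lt_pow_succ_log_self (by norm_num) n

lemma four_pow_eq_sq (j : ℕ) : (4 : ℝ) ^ j = (2 ^ j) ^ 2 := by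
  rw [← pow_mul, mul_comm, pow_mul]
  norm_num

lemma two_pow_le_sqrt {j : ℕ} {x : ℝ} (h : 4 ^ j ≤ x) : 2 ^ j ≤ √x := by
  rw [Real.le_sqrt (by positivity) ((pow_nonneg (by norm_num) j).trans h), ← four_pow_eq_sq]
  exact h

lemma sqrt_lt_two_pow {j : ℕ} {x : ℝ} (h : x < 4 ^ j) : √x < 2 ^ j := by
  rw [Real.sqrt_lt' (by positivity), ← four_pow_eq_sq]
  exact h

/-- With `u = √x` and `P = 2 ^ k`, the cubic `(u² - 4P²/3) P - 11u³/48` factors as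
`(4P - u) (11u²/48 - uP/12 - P²/3)`, which is nonnegative for `2P ≤ u < 4P`. -/
lemma one_div_six_mul_mul_sqrt_lt {k : ℕ} (hk : 1 ≤ k) {x : ℝ} (hlo : 4 ^ (k + 1) ≤ x)
    (hhi : x < 4 ^ (k + 2)) : 1 / 6 * x * √x < (x - (4 ^ (k + 1) + 2) / 3) * 2 ^ k := by
  have hP : (2 : ℝ) ≤ 2 ^ k := by simpa using pow_le_pow_right₀ (by norm_num : (1 : ℝ) ≤ 2) hk
  have hulo := two_pow_le_sqrt hlo
  have huhi := sqrt_lt_two_pow hhi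
  obtain ⟨u, hu, rfl⟩ : ∃ u : ℝ, 0 ≤ u ∧ u ^ 2 = x :=
    ⟨√x, Real.sqrt_nonneg x, Real.sq_sqrt ((pow_nonneg (by norm_num) _).trans hlo)⟩
  rw [Real.sqrt_sq hu] at hulo huhi ⊢
  rw [pow_succ'] at hulo
  rw [show (2 : ℝ) ^ (k + 2) = 4 * 2 ^ k by ring] at huhi
  rw [pow_succ (4 : ℝ) k, four_pow_eq_sq]
  set P : ℝ := 2 ^ k
  have hfactor : 0 ≤ (4 * P - u) * (11 * u ^ 2 / 48 - u * P / 12 - P ^ 2 / 3) := by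
    apply mul_nonneg (by linarith)
    nlinarith
  have hcube : 8 * P ^ 3 ≤ u ^ 3 := by
    have := pow_le_pow_left₀ (by linarith) hulo 3
    linarith
  nlinarith

end SqrtGrowth

/-- **Example (n√n growth).** Let `S ⊆ ℚ₊` be the subsemigroup generated by `1` and
`aᵢ = 4^i + 2^{-i}` for `i ≥ 1`. Then `(1/6)·n·√n < |S ∩ (0,n)| < (4/3)·n·√n` for all
sufficiently large `n`. -/
theorem example_n_sqrt_n_growth
    (S : AddSubsemigroup ℚ)
    (hS : S = AddSubsemigroup.closure
      ({1} ∪ Set.range (fun i : ℕ => (4 : ℚ) ^ (i + 1) + (1 / 2 : ℚ) ^ (i + 1)))) :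
    ∃ N : ℕ, ∀ n : ℕ, N ≤ n →
      ((S : Set ℚ) ∩ Set.Ioo 0 (n : ℚ)).Finite ∧
      (1 / 6 : ℝ) * n * Real.sqrt n < (((S : Set ℚ) ∩ Set.Ioo 0 (n : ℚ)).ncard : ℝ) ∧
      (((S : Set ℚ) ∩ Set.Ioo 0 (n : ℚ)).ncard : ℝ) < (4 / 3 : ℝ) * n * Real.sqrt n := by
  obtain rfl : S = SqrtGrowth.S := hS
  open SqrtGrowth in
  refine ⟨16, fun n hn ↦ ⟨finite_S_inter_Ioo n, ?_, ?_⟩⟩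
  all_goals obtain ⟨k, hk, hlo, hhi⟩ := exists_four_pow_le_lt hn
  · calc 1 / 6 * (n : ℝ) * √n < (n - (4 ^ (k + 1) + 2) / 3) * 2 ^ k :=
          one_div_six_mul_mul_sqrt_lt hk (by exact_mod_cast hlo) (by exact_mod_cast hhi)
      _ ≤ _ := le_ncard_S_inter_Ioo hlo
  · have hpos : (0 : ℝ) < n * √n := by positivity
    calc (((S : Set ℚ) ∩ Set.Ioo 0 n).ncard : ℝ) ≤ n * 2 ^ (k + 1) := by
          exact_mod_cast ncard_S_inter_Ioo_le hhi.le
      _ ≤ n * √n := by gcongr; exact two_pow_le_sqrt (by exact_mod_cast hlo)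
      _ < 4 / 3 * n * √n := by linarith
end

section
/- Let S ⊆ ℚ₊ be the subsemigroup generated by 1 and a_i = 10^{2^{i−1}} + 2^{−i} for i ≥ 1. Then (1/4)·n·log₁₀(n) < |S ∩ (0,n)| < 2·n·log₁₀(n) for all sufficiently large n ∈ ℕ; i.e., |S ∩ (0,n)| grows at the rate n·log n. -/
/-!
Below `n`, the only generators besides `1` are the `aᵢ` with `10 ^ 2 ^ i < n`; if these all have
`i < K`, every element of `S ∩ (0, n)` lies in `2⁻ᴷ ℤ`, leaving fewer than `n · 2 ^ K` candidates.
Conversely the sums `m + ∑ i ∈ A, aᵢ` with `m ≥ 1` and `A ⊆ {0, …, K - 1}` are pairwise distinct: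
their fractional part is the binary fraction `∑ i ∈ A, 2⁻⁽ⁱ⁺¹⁾`, which determines `A`. Taking
`2 ^ K ≈ log₁₀ n` in both directions gives the two bounds.
-/

open Finset

/-- The paper's generator `a_{i+1}`. -/
def generator (i : ℕ) : ℚ := (10 : ℚ) ^ (2 ^ i) + (1 / 2 : ℚ) ^ (i + 1)

abbrev exampleSemigroup : AddSubsemigroup ℚ :=
  AddSubsemigroup.closure ({1} ∪ Set.range generator)

theorem exists_mul_eq_intCast_of_mem_closure {G : Set ℚ} {b d : ℚ} (hpos : ∀ g ∈ G, 0 < g)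
    (hG : ∀ g ∈ G, g < b → ∃ z : ℤ, g * d = z) {x : ℚ} (hx : x ∈ AddSubsemigroup.closure G)
    (hxb : x < b) : ∃ z : ℤ, x * d = z := by
  let T : AddSubsemigroup ℚ :=
    { carrier := {x | 0 < x ∧ (x < b → ∃ z : ℤ, x * d = z)}
      add_mem' := by
        rintro x y ⟨hx, hxd⟩ ⟨hy, hyd⟩
        refine ⟨add_pos hx hy, fun hxy => ?_⟩
        obtain ⟨z, hz⟩ := hxd (by linarith)
        obtain ⟨w, hw⟩ := hyd (by linarith)
        exact ⟨z + w, by push_cast; rw [add_mul, hz, hw]⟩ }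
  have hT : AddSubsemigroup.closure G ≤ T :=
    AddSubsemigroup.closure_le.2 fun g hg => ⟨hpos g hg, hG g hg⟩
  exact (hT hx).2 hxb

theorem finite_and_ncard_lt_of_mul_eq_intCast {s : Set ℚ} {n d : ℕ} (hn : 0 < n) (hd : 0 < d)
    (hs : ∀ x ∈ s, 0 < x ∧ x < n ∧ ∃ z : ℤ, x * d = z) : s.Finite ∧ s.ncard < n * d := by
  have hd' : (0 : ℚ) < d := by exact_mod_cast hd
  have hsub : s ⊆ (Ioo (0 : ℤ) (n * d)).image (fun z : ℤ => (z : ℚ) / d) := by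
    intro x hx
    obtain ⟨hx0, hxn, z, hz⟩ := hs x hx
    have hz0 : (0 : ℚ) < z := hz ▸ mul_pos hx0 hd'
    have hzn : (z : ℚ) < n * d := hz ▸ mul_lt_mul_of_pos_right hxn hd'
    refine mem_image.2 ⟨z, mem_Ioo.2 ⟨by exact_mod_cast hz0, by exact_mod_cast hzn⟩, ?_⟩
    rw [← hz, mul_div_cancel_right₀ _ hd'.ne']
  refine ⟨(finite_toSet _).subset hsub, ?_⟩
  calc s.ncard ≤ #((Ioo (0 : ℤ) (n * d)).image (fun z : ℤ => (z : ℚ) / d)) :=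
        Set.ncard_coe_finset _ ▸ Set.ncard_le_ncard hsub (finite_toSet _)
    _ ≤ #(Ioo (0 : ℤ) (n * d)) := card_image_le
    _ < n * d := by rw [Int.card_Ioo]; have := Nat.mul_pos hn hd; omega

theorem half_pow_succ_mul_two_pow {i K : ℕ} (h : i < K) :
    (1 / 2 : ℚ) ^ (i + 1) * 2 ^ K = 2 ^ (K - 1 - i) := by
  obtain ⟨k, rfl⟩ := Nat.exists_eq_add_of_lt h
  rw [show i + k + 1 - 1 - i = k by omega, div_pow, one_pow]
  field_simp
  ring

theorem two_pow_mul_sum_half_pow_succ {K : ℕ} {A : Finset ℕ} (hA : A ⊆ range K) :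
    2 ^ K * ∑ i ∈ A, (1 / 2 : ℚ) ^ (i + 1) = ((∑ j ∈ A.image (K - 1 - ·), 2 ^ j : ℕ) : ℚ) := by
  have hinj : Set.InjOn (K - 1 - ·) A := fun i hi j hj h => by
    have := mem_range.1 (hA hi); have := mem_range.1 (hA hj); simp only at h; omega
  rw [sum_image hinj, mul_sum]
  push_cast
  exact sum_congr rfl fun i hi => by rw [mul_comm, half_pow_succ_mul_two_pow (mem_range.1 (hA hi))]

theorem sum_half_pow_succ_lt_one (A : Finset ℕ) : ∑ i ∈ A, (1 / 2 : ℚ) ^ (i + 1) < 1 := by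
  set K := (A.sup id).succ
  have hK : (0 : ℚ) < 2 ^ K := by positivity
  rw [← mul_lt_mul_iff_right₀ hK, two_pow_mul_sum_half_pow_succ (subset_range_sup_succ A), mul_one]
  exact_mod_cast Nat.geomSum_lt le_rfl fun j hj => by
    obtain ⟨i, -, rfl⟩ := mem_image.1 hj; omega

theorem sum_half_pow_succ_injective :
    Function.Injective fun A : Finset ℕ => ∑ i ∈ A, (1 / 2 : ℚ) ^ (i + 1) := by
  intro A B hAB
  set K := (A ∪ B).sup id + 1
  have hA : A ⊆ range K := subset_union_left.trans (subset_range_sup_succ _)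
  have hB : B ⊆ range K := subset_union_right.trans (subset_range_sup_succ _)
  have himage : A.image (K - 1 - ·) = B.image (K - 1 - ·) := by
    apply geomSum_injective le_rfl
    exact_mod_cast (two_pow_mul_sum_half_pow_succ hA).symm.trans
      ((congrArg _ hAB).trans (two_pow_mul_sum_half_pow_succ hB))
  have hreflect : ∀ C ⊆ range K, (C.image (K - 1 - ·)).image (K - 1 - ·) = C := fun C hC => by
    rw [image_image]
    conv_rhs => rw [← image_id (s := C)]
    exact image_congr fun i hi => by
      have := mem_range.1 (hC hi)
      simp only [Function.comp_apply, id]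
      omega
  rw [← hreflect A hA, ← hreflect B hB, himage]

theorem generator_pos (i : ℕ) : 0 < generator i := by
  unfold generator; positivity

theorem ten_pow_two_pow_lt_generator (i : ℕ) : (10 : ℚ) ^ 2 ^ i < generator i := by
  unfold generator; linarith [show (0 : ℚ) < (1 / 2) ^ (i + 1) by positivity]

theorem generator_mul_two_pow_eq_intCast {i K : ℕ} (h : i < K) :
    ∃ z : ℤ, generator i * 2 ^ K = z :=
  ⟨10 ^ 2 ^ i * 2 ^ K + 2 ^ (K - 1 - i), by
    rw [generator, add_mul, half_pow_succ_mul_two_pow h]; push_cast; rfl⟩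

theorem finite_and_ncard_lt_of_le_ten_pow_two_pow {n K : ℕ} (hn : 0 < n) (hK : n ≤ 10 ^ 2 ^ K) :
    ((exampleSemigroup : Set ℚ) ∩ Set.Ioo 0 n).Finite ∧
      ((exampleSemigroup : Set ℚ) ∩ Set.Ioo 0 n).ncard < n * 2 ^ K := by
  have hG : ∀ g ∈ {1} ∪ Set.range generator, g < n → ∃ z : ℤ, g * (2 ^ K : ℕ) = z := by
    rintro g (rfl | ⟨i, rfl⟩) hgn
    · exact ⟨2 ^ K, by push_cast; ring⟩
    · have hiK : i < K := by
        by_contra! hKi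
        have : (n : ℚ) ≤ 10 ^ 2 ^ i := by
          exact_mod_cast hK.trans
            (Nat.pow_le_pow_right (by norm_num) (Nat.pow_le_pow_right two_pos hKi))
        linarith [ten_pow_two_pow_lt_generator i]
      push_cast
      exact generator_mul_two_pow_eq_intCast hiK
  refine finite_and_ncard_lt_of_mul_eq_intCast hn (by positivity) fun x ⟨hxS, hx0, hxn⟩ =>
    ⟨hx0, hxn, exists_mul_eq_intCast_of_mem_closure ?_ hG hxS hxn⟩
  rintro g (rfl | ⟨i, rfl⟩)
  exacts [one_pos, generator_pos i]

theorem exampleSemigroup_inter_Ioo_finite (n : ℕ) :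
    ((exampleSemigroup : Set ℚ) ∩ Set.Ioo 0 n).Finite := by
  refine (finite_and_ncard_lt_of_le_ten_pow_two_pow (K := n + 1) n.succ_pos ?_).1.subset
    (Set.inter_subset_inter_right _ (Set.Ioo_subset_Ioo_right (by push_cast; linarith)))
  exact (Nat.lt_two_pow_self.trans (Nat.lt_pow_self (by norm_num))).le

theorem natCast_add_sum_generator_mem {m : ℕ} (hm : 1 ≤ m) (A : Finset ℕ) :
    (m : ℚ) + ∑ i ∈ A, generator i ∈ exampleSemigroup := by
  have h1 : (1 : ℚ) ∈ exampleSemigroup := AddSubsemigroup.subset_closure (Or.inl rfl)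
  induction A using Finset.induction_on with
  | empty =>
    induction m, hm using Nat.le_induction with
    | base => simpa using h1
    | succ m _ ih => simpa using exampleSemigroup.add_mem (by simpa using ih) h1
  | insert a A ha ih =>
    rw [sum_insert ha, add_left_comm]
    exact exampleSemigroup.add_mem (AddSubsemigroup.subset_closure (Or.inr ⟨a, rfl⟩)) ih

theorem natCast_add_sum_generator_eq (m : ℕ) (A : Finset ℕ) :
    (m : ℚ) + ∑ i ∈ A, generator i =
      ((m + ∑ i ∈ A, 10 ^ 2 ^ i : ℕ) : ℚ) + ∑ i ∈ A, (1 / 2 : ℚ) ^ (i + 1) := by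
  simp only [generator, sum_add_distrib]; push_cast; ring

theorem natCast_add_sum_generator_injective :
    Function.Injective fun p : ℕ × Finset ℕ => (p.1 : ℚ) + ∑ i ∈ p.2, generator i := by
  rintro ⟨m, A⟩ ⟨m', A'⟩ h
  simp only [natCast_add_sum_generator_eq] at h
  have hfract := congrArg Int.fract h
  have hA : A = A' := sum_half_pow_succ_injective <| by
    simpa only [Int.fract_natCast_add, Int.fract_eq_self.2 ⟨sum_nonneg fun _ _ => by positivity,
      sum_half_pow_succ_lt_one _⟩] using hfract
  subst hA
  simp only [add_left_inj, Nat.cast_inj] at h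
  rw [h]

theorem sum_range_pow_two_pow_le {b : ℕ} (hb : 2 ≤ b) (K : ℕ) :
    ∑ i ∈ range (K + 1), b ^ 2 ^ i ≤ 2 * b ^ 2 ^ K := by
  induction K with
  | zero => simp; omega
  | succ K ih =>
    rw [sum_range_succ, pow_succ 2 K, pow_mul, sq]
    have : 2 ≤ b ^ 2 ^ K := hb.trans (Nat.le_self_pow (pow_ne_zero K two_ne_zero) b)
    nlinarith

theorem two_pow_mul_le_ncard {n K M : ℕ} (h : ∑ i ∈ range K, 10 ^ 2 ^ i + M + 1 ≤ n) :
    2 ^ K * M ≤ ((exampleSemigroup : Set ℚ) ∩ Set.Ioo 0 n).ncard := by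
  set D := Icc 1 M ×ˢ (range K).powerset
  set φ : ℕ × Finset ℕ → ℚ := fun p => (p.1 : ℚ) + ∑ i ∈ p.2, generator i
  have hφ : ∀ p ∈ D, φ p ∈ (exampleSemigroup : Set ℚ) ∩ Set.Ioo 0 n := by
    rintro ⟨m, A⟩ hp
    obtain ⟨hm, hA⟩ := mem_product.1 hp
    obtain ⟨hm1, hmM⟩ := mem_Icc.1 hm
    refine ⟨natCast_add_sum_generator_mem hm1 A, ?_, ?_⟩
    · have : (1 : ℚ) ≤ m := by exact_mod_cast hm1
      linarith [sum_nonneg fun i (_ : i ∈ A) => (generator_pos i).le]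
    · have hsum : ∑ i ∈ A, 10 ^ 2 ^ i ≤ ∑ i ∈ range K, 10 ^ 2 ^ i :=
        sum_le_sum_of_subset (mem_powerset.1 hA)
      have : ((m + ∑ i ∈ A, 10 ^ 2 ^ i : ℕ) : ℚ) + 1 ≤ n := by exact_mod_cast (by omega)
      simp only [φ, natCast_add_sum_generator_eq]
      linarith [sum_half_pow_succ_lt_one A]
  calc 2 ^ K * M = #(D.image φ) := by
        rw [card_image_of_injective _ natCast_add_sum_generator_injective, card_product,
          card_powerset, card_range, Nat.card_Icc, mul_comm]; rfl
    _ ≤ _ := Set.ncard_coe_finset (D.image φ) ▸ Set.ncard_le_ncard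
        (by rintro _ hx; obtain ⟨p, hp, rfl⟩ := mem_image.1 hx; exact hφ p hp)
        (exampleSemigroup_inter_Ioo_finite n)

theorem logb_lt_natLog_add_one (b n : ℕ) : Real.logb b n < Nat.log b n + 1 := by
  have := Int.lt_floor_add_one (Real.logb b n)
  rwa [Real.floor_logb_natCast (Nat.cast_nonneg n), Int.log_natCast, Int.cast_natCast] at this

theorem ncard_lt_two_mul_logb {n : ℕ} (hn : 10 ≤ n) :
    (((exampleSemigroup : Set ℚ) ∩ Set.Ioo 0 n).ncard : ℝ) < 2 * n * Real.logb 10 n := by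
  set L := Nat.log 10 n
  have hL : L ≠ 0 := (Nat.log_pos (by norm_num) hn).ne'
  have hK : n ≤ 10 ^ 2 ^ (Nat.log 2 L + 1) :=
    (Nat.lt_pow_succ_log_self (by norm_num) n).le.trans
      (Nat.pow_le_pow_right (by norm_num) (Nat.lt_pow_succ_log_self (by norm_num) L))
  have hcard := (finite_and_ncard_lt_of_le_ten_pow_two_pow (by omega) hK).2
  have hlog : (2 : ℝ) ^ Nat.log 2 L ≤ Real.logb 10 n :=
    (by exact_mod_cast Nat.pow_log_le_self 2 hL : (2 : ℝ) ^ Nat.log 2 L ≤ L).trans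
      (by exact_mod_cast Real.natLog_le_logb n 10)
  calc _ < (n : ℝ) * 2 ^ (Nat.log 2 L + 1) := by exact_mod_cast hcard
    _ = 2 * n * 2 ^ Nat.log 2 L := by ring
    _ ≤ 2 * n * Real.logb 10 n := by gcongr

theorem quarter_mul_logb_lt_ncard {n : ℕ} (hn : 100 ≤ n) :
    (1 / 4 : ℝ) * n * Real.logb 10 n < (((exampleSemigroup : Set ℚ) ∩ Set.Ioo 0 n).ncard : ℝ) := by
  set L := Nat.log 10 n
  have hL : 2 ≤ L := (Nat.le_log_iff_pow_le (by norm_num) (by omega)).2 (by simpa using hn)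
  set K := Nat.log 2 (L - 1) + 1
  have hLK : L ≤ 2 ^ K := by
    have : L - 1 < 2 ^ K := Nat.lt_pow_succ_log_self one_lt_two (L - 1)
    omega
  have hsum : ∑ i ∈ range K, 10 ^ 2 ^ i ≤ 2 * 10 ^ (L - 1) :=
    (sum_range_pow_two_pow_le (by norm_num) _).trans <| by
      gcongr; exacts [by norm_num, Nat.pow_log_le_self 2 (by omega)]
  have hn10 : 10 * 10 ^ (L - 1) ≤ n := by
    rw [← pow_succ', show L - 1 + 1 = L by omega]; exact Nat.pow_log_le_self 10 (by omega)
  set M := n - 1 - 2 * 10 ^ (L - 1)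
  have hcount := two_pow_mul_le_ncard (K := K) (M := M) (n := n) (by omega)
  have hM : (n : ℝ) ≤ 2 * M := by exact_mod_cast (by omega : n ≤ 2 * M)
  have hlog : Real.logb 10 n < 2 * L := by
    have hlt : Real.logb 10 n < L + 1 := by exact_mod_cast logb_lt_natLog_add_one 10 n
    have h2 : (2 : ℝ) ≤ L := by exact_mod_cast hL
    linarith
  calc (1 / 4 : ℝ) * n * Real.logb 10 n < (1 / 4 : ℝ) * n * (2 * L) := by gcongr
    _ ≤ (2 ^ K * M : ℕ) := by
        push_cast
        linarith [mul_le_mul (by exact_mod_cast hLK : (L : ℝ) ≤ 2 ^ K) hM (by positivity)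
          (by positivity)]
    _ ≤ _ := by exact_mod_cast hcount

/-- **Example (n·log n growth).** Let `S ⊆ ℚ₊` be the subsemigroup generated by `1` and
`aᵢ = 10^{2^{i−1}} + 2^{−i}` for `i ≥ 1`. Then
`(1/4)·n·log₁₀ n < |S ∩ (0,n)| < 2·n·log₁₀ n` for all sufficiently large `n`. -/
theorem example_n_log_n_growth
    (S : AddSubsemigroup ℚ)
    (hS : S = AddSubsemigroup.closure
      ({1} ∪ Set.range (fun i : ℕ =>
        (10 : ℚ) ^ (2 ^ i) + (1 / 2 : ℚ) ^ (i + 1)))) :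
    ∃ N : ℕ, ∀ n : ℕ, N ≤ n →
      ((S : Set ℚ) ∩ Set.Ioo 0 (n : ℚ)).Finite ∧
      (1 / 4 : ℝ) * n * Real.logb 10 n < (((S : Set ℚ) ∩ Set.Ioo 0 (n : ℚ)).ncard : ℝ) ∧
      (((S : Set ℚ) ∩ Set.Ioo 0 (n : ℚ)).ncard : ℝ) < 2 * n * Real.logb 10 n := by
  obtain rfl : S = exampleSemigroup := hS
  exact ⟨100, fun n hn => ⟨exampleSemigroup_inter_Ioo_finite n, quarter_mul_logb_lt_ncard hn,
    ncard_lt_two_mul_logb (by omega)⟩⟩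
end

section
/- Let R be the localization of k[x,y]/(y² − x³) at (x,y), embedded in V = k[t]_{(t)} via x ↦ t², y ↦ t³, and let ν be (1/2) times the t-adic valuation restricted to R. Then S^R(ν) = {1, 3/2, 2, 5/2, 3, 7/2, …} = {m/2 : m ∈ ℤ, m ≥ 2}, s₀ = 1, and |S^R(ν) ∩ (0, n)| = 2(n−1) = P_R(n) − 1 for all positive integers n, where P_R(n) = 2n − 1 is the Hilbert polynomial of R. -/
/-!
Under `x ↦ t², y ↦ t³` the maximal ideal `(x, y)` lands in `t² k[t]`, so every value is at
least `2/2 = 1`; conversely every `t^m` with `m ≥ 2` is the image of a monomial `x^a y^b`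
with `m = 2a + 3b`, `b ∈ {0, 1}`, `a + b ≥ 1`. Hence the value set is `{m/2 : m ≥ 2}`, whose
part in `(0, n)` is the image of `m ∈ [2, 2n)`.
-/

open Polynomial

noncomputable def cuspParam (k : Type*) [CommSemiring k] : MvPolynomial (Fin 2) k →ₐ[k] k[X] :=
  MvPolynomial.aeval ![X ^ 2, X ^ 3]

section
variable {k : Type*} [CommSemiring k]

@[simp] lemma cuspParam_X_zero : cuspParam k (MvPolynomial.X 0) = X ^ 2 := by
  simp [cuspParam]

@[simp] lemma cuspParam_X_one : cuspParam k (MvPolynomial.X 1) = X ^ 3 := by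
  simp [cuspParam]

lemma X_sq_dvd_cuspParam_of_mem {f : MvPolynomial (Fin 2) k}
    (hf : f ∈ Ideal.span {MvPolynomial.X 0, MvPolynomial.X 1}) : X ^ 2 ∣ cuspParam k f := by
  have hle : Ideal.span {MvPolynomial.X 0, MvPolynomial.X 1} ≤
      (Ideal.span {(X ^ 2 : k[X])}).comap (cuspParam k) := by
    rw [Ideal.span_le, Set.insert_subset_iff, Set.singleton_subset_iff]
    refine ⟨?_, ?_⟩ <;> simp [Ideal.mem_span_singleton, pow_dvd_pow]
  exact Ideal.mem_span_singleton.mp (hle hf)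

lemma two_le_natTrailingDegree_cuspParam {f : MvPolynomial (Fin 2) k}
    (hf : f ∈ Ideal.span {MvPolynomial.X 0, MvPolynomial.X 1}) (hf0 : cuspParam k f ≠ 0) :
    2 ≤ (cuspParam k f).natTrailingDegree :=
  le_natTrailingDegree hf0 (X_pow_dvd_iff.mp (X_sq_dvd_cuspParam_of_mem hf))

lemma exists_mem_span_cuspParam_eq_X_pow {m : ℕ} (hm : 2 ≤ m) :
    ∃ f ∈ Ideal.span {MvPolynomial.X 0, MvPolynomial.X 1}, cuspParam k f = X ^ m := by
  obtain ⟨a, hm | hm⟩ : ∃ a, m = 2 * a + 2 ∨ m = 2 * a + 3 := ⟨(m - 2) / 2, by omega⟩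
  · refine ⟨MvPolynomial.X 0 ^ a * MvPolynomial.X 0, ?_, ?_⟩
    · exact Ideal.mul_mem_left _ _ (Ideal.subset_span (by simp))
    · simp [hm, pow_add, pow_mul]
  · refine ⟨MvPolynomial.X 0 ^ a * MvPolynomial.X 1, ?_, ?_⟩
    · exact Ideal.mul_mem_left _ _ (Ideal.subset_span (by simp))
    · simp [hm, pow_add, pow_mul]

lemma setOf_natTrailingDegree_cuspParam_eq_Ici [Nontrivial k] :
    {d | ∃ f ∈ Ideal.span {MvPolynomial.X 0, MvPolynomial.X 1},
      cuspParam k f ≠ 0 ∧ (cuspParam k f).natTrailingDegree = d} = Set.Ici 2 := by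
  ext d
  constructor
  · rintro ⟨f, hf, hf0, rfl⟩
    exact two_le_natTrailingDegree_cuspParam hf hf0
  · intro hd
    obtain ⟨f, hf, hfd⟩ := exists_mem_span_cuspParam_eq_X_pow (k := k) hd
    exact ⟨f, hf, hfd ▸ (monic_X_pow d).ne_zero, by rw [hfd, natTrailingDegree_X_pow]⟩

end

lemma encard_image_half_Ici_two_inter_Ioo (n : ℕ) :
    ((fun m : ℕ => (m : ℚ) / 2) '' Set.Ici 2 ∩ Set.Ioo 0 n).encard = (2 * (n - 1) : ℕ) := by
  have hset : (fun m : ℕ => (m : ℚ) / 2) '' Set.Ici 2 ∩ Set.Ioo 0 n =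
      (fun m : ℕ => (m : ℚ) / 2) '' Set.Ico 2 (2 * n) := by
    ext γ
    simp only [Set.mem_inter_iff, Set.mem_image, Set.mem_Ici, Set.mem_Ico, Set.mem_Ioo]
    constructor
    · rintro ⟨⟨m, hm, rfl⟩, -, hlt⟩
      refine ⟨m, ⟨hm, ?_⟩, rfl⟩
      have : (m : ℚ) < 2 * n := by linarith
      exact_mod_cast this
    · rintro ⟨m, ⟨hm, hlt⟩, rfl⟩
      have h2 : (2 : ℚ) ≤ m := by exact_mod_cast hm
      have hlt : (m : ℚ) < 2 * n := by exact_mod_cast hlt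
      exact ⟨⟨m, hm, rfl⟩, by linarith, by linarith⟩
  have hinj : Function.Injective fun m : ℕ => (m : ℚ) / 2 := fun a b h => by
    simpa using h
  rw [hset, hinj.encard_image, ← (Set.finite_Ico _ _).cast_ncard_eq, Set.ncard_Ico_nat]
  congr 1
  omega

/-- **Example.** Let `R` be the localization of `k[x,y]/(y² − x³)` at `(x,y)`, embedded into
`k[t]_(t)` via `x ↦ t², y ↦ t³`, and let `ν` be `1/2` times the `t`-adic valuation. Since
`k[x,y]/(y²−x³) ≅ k[t²,t³]` via the map `φ = aeval (t², t³)` (whose kernel is `(y²−x³)`), and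
elements outside `(x,y)` have value `0`, the value semigroup `S^R(ν)` is the set of values
`ν(f) = ord_t(φ f)/2` for `f ∈ (x,y)` with `φ f ≠ 0`. Then
`S^R(ν) = {m/2 : m ∈ ℤ, m ≥ 2}`, the smallest element is `s₀ = 1`, and
`|S^R(ν) ∩ (0,n)| = 2(n−1) = P_R(n) − 1` for all `n ≥ 1`, where `P_R(n) = 2n − 1` is the
Hilbert polynomial of `R`. -/
theorem cusp_value_semigroup (k : Type*) [Field k]
    (φ : MvPolynomial (Fin 2) k →ₐ[k] Polynomial k)
    (hφ : φ = MvPolynomial.aeval ![Polynomial.X ^ 2, Polynomial.X ^ 3])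
    (ν : MvPolynomial (Fin 2) k → ℚ)
    (hν : ∀ f, ν f = ((φ f).natTrailingDegree : ℚ) / 2)
    (S : Set ℚ)
    (hS : S = {γ : ℚ | ∃ f ∈ Ideal.span
      ({MvPolynomial.X 0, MvPolynomial.X 1} : Set (MvPolynomial (Fin 2) k)),
      φ f ≠ 0 ∧ ν f = γ}) :
    S = {γ : ℚ | ∃ m : ℕ, 2 ≤ m ∧ γ = (m : ℚ) / 2} ∧
    ((1 : ℚ) ∈ S ∧ ∀ x ∈ S, 1 ≤ x) ∧
    ∀ n : ℕ, 1 ≤ n →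
      (S ∩ Set.Ioo 0 (n : ℚ)).encard = ((2 * (n - 1) : ℕ) : ℕ∞) ∧
      (2 * (n - 1) : ℕ) = (2 * n - 1) - 1 := by
  obtain rfl : φ = cuspParam k := hφ
  have hS_image : S = (fun m : ℕ => (m : ℚ) / 2) '' Set.Ici 2 := by
    rw [hS, ← setOf_natTrailingDegree_cuspParam_eq_Ici (k := k)]
    ext γ
    simp [hν, and_assoc]
  have hS_half : S = {γ : ℚ | ∃ m : ℕ, 2 ≤ m ∧ γ = (m : ℚ) / 2} := by
    rw [hS_image]
    ext γ
    simp [eq_comm]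
  refine ⟨hS_half, ⟨?_, ?_⟩, fun n _ => ⟨?_, by omega⟩⟩
  · exact hS_half ▸ ⟨2, le_rfl, by norm_num⟩
  · rw [hS_half]
    rintro _ ⟨m, hm, rfl⟩
    rw [le_div_iff₀ two_pos]
    exact_mod_cast hm
  · rw [hS_image, encard_image_half_Ici_two_inter_Ioo]
end
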